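/- arXiv:2511.22655 — 5 statements merged into one kernel-verified Lean document; each statement's English description precedes it below -/
import Mathlib

section
/- Let n and d be positive integers and let x, z ∈ L_{d,n}. Then x R z if and only if x ≼ z, i.e. if and only if x_1 ≤ z_1 < x_2 ≤ z_2 < ⋯ < x_d ≤ z_d. -/
/-- `y : Fin e → ℕ` encodes a lattice path in the `e × n` rectangle: the strictly
increasing tuple of positions (among the `n + e` steps, numbered `1, …, n + e`)
of the `e` horizontal steps. -/
def IsLatticePath (n e : ℕ) (y : Fin e → ℕ) : Prop :=
  StrictMono y ∧ (∀ k, 1 ≤ y k) ∧ (∀ k, y k ≤ n + e)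

/-- The Young diagram of a path: the unit squares `(a, b)` (0-based) between the
path and the bottom and right boundaries, i.e. `a ≤ e - 1` and `b ≤ y_{a+1} - a - 2`. -/
def Young (e : ℕ) (y : Fin e → ℕ) : Set (ℕ × ℕ) :=
  {p | ∃ h : p.1 < e, p.2 + p.1 + 2 ≤ y ⟨p.1, h⟩}

/-- The relation `R`: `y R z` iff `Y_y ⊆ Y_z` and no horizontal `(2 × 1)`-rectangle
fits inside `Y_z \ Y_y`. -/
def RelR (e : ℕ) (y z : Fin e → ℕ) : Prop :=
  Young e y ⊆ Young e z ∧
    ¬ ∃ a b : ℕ, ((a, b) ∈ Young e z \ Young e y ∧ (a + 1, b) ∈ Young e z \ Young e y)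

/-- The rotation `r` on lattice paths: move the first step of the path to the end. -/
def rot (n e : ℕ) (y : Fin e → ℕ) : Fin e → ℕ :=
  fun k =>
    if h0 : 0 < e then
      if y ⟨0, h0⟩ = 1 then
        if hk : (k : ℕ) + 1 < e then y ⟨(k : ℕ) + 1, hk⟩ - 1 else n + e
      else y k - 1
    else y k

/-- `x` is a rational `(d, n)`-Dyck path: a lattice path staying weakly below the
diagonal, i.e. `d * (x_k - k) ≤ n * (k - 1)` for all `1 ≤ k ≤ d`. -/
def InDyck (n d : ℕ) (x : Fin d → ℕ) : Prop :=
  IsLatticePath n d x ∧ ∀ j : Fin d, d * (x j - ((j : ℕ) + 1)) ≤ n * (j : ℕ)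

/-- `x̄ = (1, x_1 + 1, …, x_d + 1)`: prepend a horizontal step. -/
def barPath (d : ℕ) (x : Fin d → ℕ) : Fin (d + 1) → ℕ :=
  Fin.cons 1 (fun j => x j + 1)

/-- The lattice points visited by the path `y`: the points `(h_m, m - h_m)` for
`0 ≤ m ≤ n + e`, where `h_m = #{k : y_k ≤ m}`. -/
def Visited (n e : ℕ) (y : Fin e → ℕ) (p : ℕ × ℕ) : Prop :=
  ∃ m ≤ n + e, p.1 = (Finset.univ.filter (fun k : Fin e => y k ≤ m)).card ∧ p.2 = m - p.1

/-- The lattice point `(a, b)` lies below the curve `δ_{(u,v)}`. -/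
def BelowDelta (n d u v a b : ℕ) : Prop :=
  if a ≤ u then (d : ℤ) * b ≤ (d : ℤ) * v + (n : ℤ) * ((a : ℤ) - (u : ℤ))
  else (d : ℤ) * b ≤ (d : ℤ) * v + (n : ℤ) * ((a : ℤ) - (u : ℤ) - 1)

/-- `Δ`: the lattice points of the `(d+1) × n` rectangle, other than `(d+1, n)`,
lying below `δ_{(0,0)}`. -/
def InDelta (n d : ℕ) (p : ℕ × ℕ) : Prop :=
  p.1 ≤ d + 1 ∧ p.2 ≤ n ∧ p ≠ (d + 1, n) ∧ BelowDelta n d 0 0 p.1 p.2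

/-- `Δ'`: the lattice points of the `(d+1) × n` rectangle, other than `(0, 0)`,
lying above `δ_{(d,n)}`. -/
def InDelta' (n d : ℕ) (p : ℕ × ℕ) : Prop :=
  p.1 ≤ d + 1 ∧ p.2 ≤ n ∧ p ≠ (0, 0) ∧
    ((p.1 ≤ d ∧ n * p.1 ≤ d * p.2) ∨ p = (d + 1, n))

/-- The path `ℓ_{(u,v)} = (1, 2, …, u, u + v, u + v + 1, …, d + v)`. -/
def ellUV (d u v : ℕ) : Fin (d + 1) → ℕ :=
  fun k => if (k : ℕ) < u then (k : ℕ) + 1 else v + (k : ℕ)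

/-- The region `R_{(u,v)}` (for `u ≤ d`, `v ≥ 1`): paths `y ∈ L_{d+1,n}` with
`y ≥ ℓ_{(u,v)}` componentwise, all of whose visited points lie below `δ_{(u,v)}`. -/
def InR (n d u v : ℕ) (y : Fin (d + 1) → ℕ) : Prop :=
  IsLatticePath n (d + 1) y ∧ (∀ k, ellUV d u v k ≤ y k) ∧
    ∀ p : ℕ × ℕ, Visited n (d + 1) y p → BelowDelta n d u v p.1 p.2

/-- The region `R_{(0,0)}`: paths in `L_{d+1,n}` all of whose visited points lie
below `δ_{(0,0)}`. -/
def InR00 (n d : ℕ) (y : Fin (d + 1) → ℕ) : Prop :=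
  IsLatticePath n (d + 1) y ∧
    ∀ p : ℕ × ℕ, Visited n (d + 1) y p → BelowDelta n d 0 0 p.1 p.2

/-- `S_D`: the paths of `R_{(0,0)}` passing through the lattice point `D`. -/
def InS (n d : ℕ) (D : ℕ × ℕ) (y : Fin (d + 1) → ℕ) : Prop :=
  InR00 n d y ∧ Visited n (d + 1) y D


lemma path_lb {d : ℕ} (f : Fin d → ℕ) (hf : StrictMono f) (h1 : ∀ k, 1 ≤ f k) :
    ∀ k : Fin d, (k : ℕ) + 1 ≤ f k := by
  intro k
  obtain ⟨v, hv⟩ := k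
  induction v with
  | zero => exact h1 _
  | succ m ih =>
      have h2 : f ⟨m, Nat.lt_of_succ_lt hv⟩ < f ⟨m + 1, hv⟩ := hf (by simp [Fin.lt_def])
      have h3 := ih (Nat.lt_of_succ_lt hv)
      simp only [Fin.val_mk] at h3 ⊢
      omega

/-- for `x, z ∈ L_{d,n}`, `x R z` iff `x ≼ z`, i.e. iff
`x_1 ≤ z_1 < x_2 ≤ z_2 < ⋯ < x_d ≤ z_d`. -/
theorem stmt0 (n d : ℕ) (hn : 0 < n) (hd : 0 < d) (x z : Fin d → ℕ)
    (hx : IsLatticePath n d x) (hz : IsLatticePath n d z) :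
    RelR d x z ↔
      ((∀ k : Fin d, x k ≤ z k) ∧
        ∀ k : Fin d, ∀ h : (k : ℕ) + 1 < d, z k < x ⟨(k : ℕ) + 1, h⟩) := by
  obtain ⟨hxm, hx1, -⟩ := hx
  obtain ⟨hzm, hz1, -⟩ := hz
  have hxlb := path_lb x hxm hx1
  have hzlb := path_lb z hzm hz1
  constructor
  · rintro ⟨hsub, hnod⟩
    constructor
    · intro k
      by_cases hk : x k ≤ (k : ℕ) + 1
      · exact hk.trans (hzlb k)
      · have hmem : ((k : ℕ), x k - (k : ℕ) - 2) ∈ Young d x := by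
          refine ⟨k.isLt, ?_⟩
          simp only [Fin.eta]
          omega
        obtain ⟨h', hle⟩ := hsub hmem
        simp only [Fin.eta] at hle
        omega
    · intro k h
      by_contra hcon
      push_neg at hcon
      apply hnod
      refine ⟨(k : ℕ), x ⟨(k : ℕ) + 1, h⟩ - (k : ℕ) - 2, ⟨⟨?_, ?_⟩, ⟨?_, ?_⟩⟩⟩
      · refine ⟨Nat.lt_of_succ_lt h, ?_⟩
        simp only [Fin.eta]
        have := hxlb ⟨(k : ℕ) + 1, h⟩
        simp only [Fin.val_mk] at this
        omega
      · rintro ⟨h', hle⟩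
        simp only [Fin.eta] at hle
        have hx2 := hxm (show k < ⟨(k : ℕ) + 1, h⟩ by simp [Fin.lt_def])
        have := hxlb ⟨(k : ℕ) + 1, h⟩
        simp only [Fin.val_mk] at this
        omega
      · refine ⟨h, ?_⟩
        have hz2 := hzm (show k < ⟨(k : ℕ) + 1, h⟩ by simp [Fin.lt_def])
        have := hxlb ⟨(k : ℕ) + 1, h⟩
        simp only [Fin.val_mk] at this ⊢
        omega
      · rintro ⟨h', hle⟩
        have := hxlb ⟨(k : ℕ) + 1, h⟩
        simp only [Fin.val_mk] at this hle
        omega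
  · rintro ⟨hle, hlt⟩
    constructor
    · rintro ⟨a, b⟩ ⟨ha, hb⟩
      exact ⟨ha, hb.trans (hle _)⟩
    · rintro ⟨a, b, ⟨⟨⟨ha1, hzb1⟩, hxb1⟩, ⟨⟨ha2, hzb2⟩, hxb2⟩⟩⟩
      have hnx : ¬ (b + (a + 1) + 2 ≤ x ⟨a + 1, ha2⟩) := fun hc => hxb2 ⟨ha2, hc⟩
      have hk := hlt ⟨a, ha1⟩ ha2
      simp only [Fin.val_mk] at hk hzb1
      omega
end

section
/- Let n and d be positive integers with gcd(n,d) = 1. Then r^{n+d} is the identity map on L_{d,n}, and for every x ∈ L_{d,n} and every integer k with 1 ≤ k ≤ n+d−1 one has r^k(x) ≠ x. Consequently the rotation r generates a free action of ℤ/(n+d)ℤ on L_{d,n}, and every r-orbit in L_{d,n} has exactly n+d elements. -/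
open Finset

namespace Stmt2Aux

lemma cast_inj_aux (N a b : ℕ) (ha1 : 1 ≤ a) (haN : a ≤ N)
    (hb1 : 1 ≤ b) (hbN : b ≤ N) (hab : (a : ZMod N) = (b : ZMod N)) : a = b := by
  have h2 : a ≡ b [MOD N] := (ZMod.natCast_eq_natCast_iff a b N).mp hab
  have h3 : (N : ℤ) ∣ (b : ℤ) - a := h2.dvd
  have h4 : (b : ℤ) - a = 0 := by
    refine Int.eq_zero_of_abs_lt_dvd h3 ?_
    rw [abs_lt]
    constructor <;> omega
  omega

variable {n d : ℕ}

/-- rot preserves lattice paths. -/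
lemma rot_lp (hd : 0 < d) {y : Fin d → ℕ} (hy : IsLatticePath n d y) :
    IsLatticePath n d (rot n d y) := by
  obtain ⟨hmono, h1, hN⟩ := hy
  have hge : ∀ k : Fin d, (0 : ℕ) < (k : ℕ) → 2 ≤ y k := by
    intro k hk
    have := hmono (show (⟨0, hd⟩ : Fin d) < k from hk)
    have := h1 ⟨0, hd⟩
    omega
  by_cases hc : y ⟨0, hd⟩ = 1
  · refine ⟨?_, ?_, ?_⟩
    · intro a b hab
      simp only [rot, dif_pos hd, if_pos hc]
      split_ifs with h2 h3 h3
      · have : y ⟨(a:ℕ)+1, h2⟩ < y ⟨(b:ℕ)+1, h3⟩ := hmono (by simpa using Fin.lt_iff_val_lt_val.mpr (by simpa using Nat.add_lt_add_right hab 1))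
        have := hge ⟨(a:ℕ)+1, h2⟩ (by simp)
        omega
      · have := hN ⟨(a:ℕ)+1, h2⟩
        have hd2 : 0 < n + d := by omega
        omega
      · exact absurd (lt_trans (Nat.add_lt_add_right (Fin.lt_iff_val_lt_val.mp hab) 1) h3) h2
      · have h4 := Fin.lt_iff_val_lt_val.mp hab
        have h5 := b.isLt
        omega
    · intro k
      simp only [rot, dif_pos hd, if_pos hc]
      split_ifs with h2
      · have := hge ⟨(k:ℕ)+1, h2⟩ (by simp); omega
      · omega
    · intro k
      simp only [rot, dif_pos hd, if_pos hc]
      split_ifs with h2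
      · have := hN ⟨(k:ℕ)+1, h2⟩; omega
      · omega
  · have hge2 : ∀ k, 2 ≤ y k := by
      intro k
      rcases Nat.eq_zero_or_pos (k : ℕ) with h0 | h0
      · have : k = ⟨0, hd⟩ := Fin.ext h0
        rw [this]; have := h1 ⟨0, hd⟩; omega
      · exact hge k h0
    refine ⟨?_, ?_, ?_⟩
    · intro a b hab
      simp only [rot, dif_pos hd, if_neg hc]
      have := hmono hab
      have := hge2 a
      omega
    · intro k
      simp only [rot, dif_pos hd, if_neg hc]
      have := hge2 k; omega
    · intro k
      simp only [rot, dif_pos hd, if_neg hc]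
      have := hN k; omega

/-- The image in ZMod (n+d) of rot y is the shifted image. -/
lemma image_rot (hd : 0 < d) {y : Fin d → ℕ} (hy : IsLatticePath n d y) :
    (univ.image fun k : Fin d => ((rot n d y k : ℕ) : ZMod (n + d))) =
      univ.image fun k : Fin d => ((y k : ℕ) : ZMod (n + d)) - 1 := by
  obtain ⟨hmono, h1, hN⟩ := hy
  by_cases hc : y ⟨0, hd⟩ = 1
  · set σ : Fin d → Fin d := fun k => if hk : (k : ℕ) + 1 < d then ⟨(k:ℕ)+1, hk⟩ else ⟨0, hd⟩ with hσ
    have hσsurj : Function.Surjective σ := by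
      rintro ⟨j, hj⟩
      rcases Nat.eq_zero_or_pos j with h0 | h0
      · refine ⟨⟨d - 1, by omega⟩, ?_⟩
        simp only [hσ]
        rw [dif_neg (show ¬(d - 1 + 1 < d) by omega)]
        exact Fin.ext (show (0:ℕ) = j by omega)
      · refine ⟨⟨j - 1, by omega⟩, ?_⟩
        simp only [hσ]
        rw [dif_pos (show j - 1 + 1 < d by omega)]
        exact Fin.ext (show j - 1 + 1 = j by omega)
    have key : ∀ k : Fin d, ((rot n d y k : ℕ) : ZMod (n + d)) =
        ((y (σ k) : ℕ) : ZMod (n + d)) - 1 := by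
      intro k
      simp only [rot, dif_pos hd, if_pos hc, hσ]
      split_ifs with h2
      · have hge : 2 ≤ y ⟨(k:ℕ)+1, h2⟩ := by
          have := hmono (show (⟨0, hd⟩ : Fin d) < ⟨(k:ℕ)+1, h2⟩ from by simp [Fin.lt_iff_val_lt_val])
          omega
        push_cast [Nat.cast_sub (show 1 ≤ y ⟨(k:ℕ)+1, h2⟩ by omega)]
        ring
      · rw [hc, ZMod.natCast_self, Nat.cast_one, sub_self]
    calc (univ.image fun k : Fin d => ((rot n d y k : ℕ) : ZMod (n + d)))
        = univ.image ((fun j : Fin d => ((y j : ℕ) : ZMod (n + d)) - 1) ∘ σ) := by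
          apply image_congr; intro k _; exact key k
      _ = (univ.image σ).image (fun j : Fin d => ((y j : ℕ) : ZMod (n + d)) - 1) := by
          rw [Finset.image_image]
      _ = univ.image fun j : Fin d => ((y j : ℕ) : ZMod (n + d)) - 1 := by
          rw [Finset.image_univ_of_surjective hσsurj]
  · apply image_congr
    intro k _
    have hge2 : 2 ≤ y k := by
      rcases Nat.eq_zero_or_pos (k : ℕ) with h0 | h0
      · have hk0 : k = ⟨0, hd⟩ := Fin.ext h0
        rw [hk0]; have := h1 ⟨0, hd⟩; omega
      · have := hmono (show (⟨0, hd⟩ : Fin d) < k from h0)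
        have := h1 ⟨0, hd⟩; omega
    simp only [rot, dif_pos hd, if_neg hc]
    push_cast [Nat.cast_sub (show 1 ≤ y k by omega)]
    ring

lemma iter_lp_image (hd : 0 < d) {x : Fin d → ℕ} (hx : IsLatticePath n d x) (j : ℕ) :
    IsLatticePath n d ((rot n d)^[j] x) ∧
      (univ.image fun k : Fin d => (((rot n d)^[j] x k : ℕ) : ZMod (n + d))) =
        univ.image fun k : Fin d => ((x k : ℕ) : ZMod (n + d)) - (j : ZMod (n + d)) := by
  induction j with
  | zero =>
    refine ⟨hx, ?_⟩
    simp
  | succ j ih =>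
    obtain ⟨ihlp, ihim⟩ := ih
    constructor
    · rw [Function.iterate_succ_apply']
      exact rot_lp hd ihlp
    · rw [Function.iterate_succ_apply', image_rot hd ihlp]
      have : (univ.image fun k : Fin d => (((rot n d)^[j] x k : ℕ) : ZMod (n + d)) - 1)
          = (univ.image fun k : Fin d => (((rot n d)^[j] x k : ℕ) : ZMod (n + d))).image
              (fun a => a - 1) := by
        rw [Finset.image_image]; rfl
      rw [this, ihim, Finset.image_image]
      apply image_congr
      intro k _
      simp only [Function.comp_apply]
      push_cast
      ring

/-- Lattice paths with equal ZMod images are equal. -/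
lemma path_eq_of_image_eq (hd : 0 < d) {y z : Fin d → ℕ}
    (hy : IsLatticePath n d y) (hz : IsLatticePath n d z)
    (him : (univ.image fun k : Fin d => ((y k : ℕ) : ZMod (n + d))) =
      univ.image fun k : Fin d => ((z k : ℕ) : ZMod (n + d))) : y = z := by
  have hT : univ.image y = univ.image z := by
    have main : ∀ (u v : Fin d → ℕ), IsLatticePath n d u → IsLatticePath n d v →
        (univ.image fun k : Fin d => ((u k : ℕ) : ZMod (n + d))) =
          (univ.image fun k : Fin d => ((v k : ℕ) : ZMod (n + d))) →
        univ.image u ⊆ univ.image v := by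
      intro u v hu hv he
      intro a ha
      obtain ⟨k, _, hk⟩ := Finset.mem_image.mp ha
      have : ((u k : ℕ) : ZMod (n + d)) ∈ univ.image fun k : Fin d => ((v k : ℕ) : ZMod (n + d)) := by
        rw [← he]; exact Finset.mem_image_of_mem _ (mem_univ k)
      obtain ⟨m, _, hm⟩ := Finset.mem_image.mp this
      have : v m = u k := cast_inj_aux (n + d) (v m) (u k)
        (hv.2.1 m) (hv.2.2 m) (hu.2.1 k) (hu.2.2 k) hm
      rw [← hk, ← this]
      exact Finset.mem_image_of_mem _ (mem_univ m)
    exact le_antisymm (main y z hy hz him) (main z y hz hy him.symm)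
  have hcard : (univ.image y).card = d := by
    rw [Finset.card_image_of_injective _ hy.1.injective, Finset.card_univ, Fintype.card_fin]
  have hy' : y = (univ.image y).orderEmbOfFin hcard :=
    Finset.orderEmbOfFin_unique hcard (fun k => Finset.mem_image_of_mem _ (mem_univ k)) hy.1
  have hcard' : (univ.image y).card = d := hcard
  have hz' : z = (univ.image y).orderEmbOfFin hcard := by
    apply Finset.orderEmbOfFin_unique hcard _ hz.1
    intro k
    rw [hT]
    exact Finset.mem_image_of_mem _ (mem_univ k)
  rw [hy', hz']

lemma card_image_cast (hd : 0 < d) {x : Fin d → ℕ} (hx : IsLatticePath n d x) :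
    (univ.image fun k : Fin d => ((x k : ℕ) : ZMod (n + d))).card = d := by
  rw [Finset.card_image_of_injective _ ?_, Finset.card_univ, Fintype.card_fin]
  intro a b hab
  have := cast_inj_aux (n + d) (x a) (x b) (hx.2.1 a) (hx.2.2 a) (hx.2.1 b) (hx.2.2 b) hab
  exact hx.1.injective this

end Stmt2Aux

/-- if `gcd(n,d) = 1` then `r^{n+d}` is the identity on `L_{d,n}`,
`r^k(x) ≠ x` for `1 ≤ k ≤ n + d - 1`, and every `r`-orbit has exactly `n + d`
elements. -/
theorem stmt2 (n d : ℕ) (hn : 0 < n) (hd : 0 < d) (h : Nat.gcd n d = 1) :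
    (∀ x : Fin d → ℕ, IsLatticePath n d x → (rot n d)^[n + d] x = x) ∧
    (∀ x : Fin d → ℕ, IsLatticePath n d x →
      ∀ k : ℕ, 1 ≤ k → k ≤ n + d - 1 → (rot n d)^[k] x ≠ x) ∧
    (∀ x : Fin d → ℕ, IsLatticePath n d x →
      (Finset.image (fun k => (rot n d)^[k] x) (Finset.range (n + d))).card = n + d) := by
  have hcop : Nat.Coprime d (n + d) := by
    rw [Nat.coprime_add_self_right]
    exact Nat.Coprime.symm h
  have part1 : ∀ x : Fin d → ℕ, IsLatticePath n d x → (rot n d)^[n + d] x = x := by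
    intro x hx
    obtain ⟨hlp, him⟩ := Stmt2Aux.iter_lp_image hd hx (n + d)
    apply Stmt2Aux.path_eq_of_image_eq hd hlp hx
    rw [him]
    apply Finset.image_congr
    intro k _
    simp [ZMod.natCast_self]
  have part2 : ∀ x : Fin d → ℕ, IsLatticePath n d x →
      ∀ k : ℕ, 1 ≤ k → k ≤ n + d - 1 → (rot n d)^[k] x ≠ x := by
    intro x hx k hk1 hk2 heq
    obtain ⟨hlp, him⟩ := Stmt2Aux.iter_lp_image hd hx k
    rw [heq] at him
    set A := Finset.univ.image (fun i : Fin d => ((x i : ℕ) : ZMod (n + d))) with hA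
    have him2 : A = A.image (fun a => a - (k : ZMod (n + d))) := by
      rw [hA, Finset.image_image]
      exact him.trans (Finset.image_congr fun _ _ => rfl)
    have hsum : ∑ a ∈ A, a = ∑ a ∈ A, (a - (k : ZMod (n + d))) := by
      conv_lhs => rw [him2]
      rw [Finset.sum_image]
      intro a _ b _ hab
      exact sub_left_inj.mp hab
    have hsum2 : ∑ a ∈ A, (a - (k : ZMod (n + d))) =
        (∑ a ∈ A, a) - A.card • (k : ZMod (n + d)) := by
      rw [Finset.sum_sub_distrib, Finset.sum_const]
    have hcard : A.card = d := Stmt2Aux.card_image_cast hd hx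
    have h0 : (d : ZMod (n + d)) * (k : ZMod (n + d)) = 0 := by
      have h1 := hsum
      rw [hsum2, hcard, eq_sub_iff_add_eq] at h1
      have h2 := add_eq_left.mp h1
      rwa [nsmul_eq_mul] at h2
    have hunit : IsUnit (d : ZMod (n + d)) := (ZMod.isUnit_iff_coprime d (n + d)).mpr hcop
    have hk0 : (k : ZMod (n + d)) = 0 := (IsUnit.mul_right_eq_zero hunit).mp h0
    rw [ZMod.natCast_eq_zero_iff] at hk0
    have := Nat.le_of_dvd (by omega) hk0
    omega
  refine ⟨part1, part2, ?_⟩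
  intro x hx
  have key : ∀ i j : ℕ, i < j → j < n + d → (rot n d)^[i] x = (rot n d)^[j] x → False := by
    intro i j hij hj heq
    have h1 : (rot n d)^[(n + d - j) + j] x = x := by
      rw [Nat.sub_add_cancel (le_of_lt hj)]
      exact part1 x hx
    have h2 : (rot n d)^[(n + d - j) + i] x = x := by
      rw [Function.iterate_add_apply, heq, ← Function.iterate_add_apply]
      exact h1
    exact part2 x hx ((n + d - j) + i) (by omega) (by omega) h2
  rw [Finset.card_image_of_injOn, Finset.card_range]
  intro i hi j hj heq
  simp only [Finset.coe_range, Set.mem_Iio] at hi hj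
  rcases lt_trichotomy i j with hlt | heq' | hgt
  · exact absurd heq (fun e => key i j hlt hj e)
  · exact heq'
  · exact absurd heq.symm (fun e => key j i hgt hi e)
end

section
/- Let n and d be positive integers with gcd(n,d) = 1. For every x ∈ L_{d,n} there is exactly one integer k with 0 ≤ k ≤ n+d−1 such that r^k(x) ∈ Dyck_{d,n}; that is, each rotation orbit in L_{d,n} contains exactly one rational (d,n)-Dyck path. -/
namespace Stmt3Aux

variable {n d : ℕ}

lemma le_apply {y : Fin d → ℕ} (hy : IsLatticePath n d y) (j : Fin d) :
    (j : ℕ) + 1 ≤ y j := by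
  obtain ⟨hm, h1, _⟩ := hy
  obtain ⟨i, hi⟩ := j
  induction i with
  | zero => exact h1 _
  | succ i ih =>
      have hi' : i < d := by omega
      have h2 := hm (a := ⟨i, hi'⟩) (b := ⟨i+1, hi⟩) (by simp [Fin.mk_lt_mk])
      have h3 := ih hi'
      simp only [Fin.val_mk] at h2 h3 ⊢
      omega

lemma rot_path (hd : 0 < d) {y : Fin d → ℕ} (hy : IsLatticePath n d y) :
    IsLatticePath n d (rot n d y) := by
  obtain ⟨hm, h1, hN⟩ := hy
  by_cases hy0 : y ⟨0, hd⟩ = 1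
  · refine ⟨?_, ?_, ?_⟩
    · intro a b hab
      have hab' : (a : ℕ) < (b : ℕ) := hab
      simp only [rot, dif_pos hd, if_pos hy0]
      by_cases hb : (b : ℕ) + 1 < d
      · have ha : (a : ℕ) + 1 < d := by omega
        rw [dif_pos ha, dif_pos hb]
        have := hm (a := ⟨(a:ℕ)+1, ha⟩) (b := ⟨(b:ℕ)+1, hb⟩) (by simp [Fin.mk_lt_mk]; omega)
        have h1' := h1 ⟨(a:ℕ)+1, ha⟩
        omega
      · have ha : (a : ℕ) + 1 < d := by omega
        rw [dif_pos ha, dif_neg hb]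
        have := hN ⟨(a:ℕ)+1, ha⟩
        have h0a := hm (a := ⟨0, hd⟩) (b := ⟨(a:ℕ)+1, ha⟩) (by simp [Fin.mk_lt_mk])
        omega
    · intro k
      simp only [rot, dif_pos hd, if_pos hy0]
      by_cases hk : (k : ℕ) + 1 < d
      · rw [dif_pos hk]
        have := hm (a := ⟨0, hd⟩) (b := ⟨(k:ℕ)+1, hk⟩) (by simp [Fin.mk_lt_mk])
        omega
      · rw [dif_neg hk]; omega
    · intro k
      simp only [rot, dif_pos hd, if_pos hy0]
      by_cases hk : (k : ℕ) + 1 < d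
      · rw [dif_pos hk]; have := hN ⟨(k:ℕ)+1, hk⟩; omega
      · rw [dif_neg hk]
  · have h2 : ∀ k, 2 ≤ y k := by
      intro k
      have h0 := h1 ⟨0, hd⟩
      rcases Nat.lt_or_ge (k : ℕ) 1 with hk | hk
      · have : k = ⟨0, hd⟩ := by apply Fin.ext; simp only [Fin.val_mk]; omega
        subst this; omega
      · have := hm (a := ⟨0, hd⟩) (b := k) (by rw [Fin.lt_def]; simp only [Fin.val_mk]; omega)
        omega
    refine ⟨?_, ?_, ?_⟩
    · intro a b hab
      simp only [rot, dif_pos hd, if_neg hy0]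
      have := hm hab
      have := h2 a
      omega
    · intro k
      simp only [rot, dif_pos hd, if_neg hy0]
      have := h2 k; omega
    · intro k
      simp only [rot, dif_pos hd, if_neg hy0]
      have := hN k; omega

lemma rot_mem (hd : 0 < d) {y : Fin d → ℕ} (hy : IsLatticePath n d y)
    {v : ℕ} (hv1 : 1 ≤ v) (hv2 : v ≤ n + d) :
    (∃ k, rot n d y k = v) ↔ (∃ k, y k = v % (n + d) + 1) := by
  obtain ⟨hm, h1, hN⟩ := hy
  by_cases hy0 : y ⟨0, hd⟩ = 1
  · rcases eq_or_lt_of_le hv2 with hv | hv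
    · subst hv
      rw [Nat.mod_self]
      constructor
      · intro _; exact ⟨⟨0, hd⟩, hy0⟩
      · intro _
        refine ⟨⟨d - 1, by omega⟩, ?_⟩
        simp only [rot, dif_pos hd, if_pos hy0]
        rw [dif_neg (by omega)]
    · rw [Nat.mod_eq_of_lt hv]
      constructor
      · rintro ⟨k, hk⟩
        simp only [rot, dif_pos hd, if_pos hy0] at hk
        by_cases hk' : (k : ℕ) + 1 < d
        · rw [dif_pos hk'] at hk
          have := hm (a := ⟨0, hd⟩) (b := ⟨(k:ℕ)+1, hk'⟩) (by simp [Fin.mk_lt_mk])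
          exact ⟨⟨(k:ℕ)+1, hk'⟩, by omega⟩
        · rw [dif_neg hk'] at hk; omega
      · rintro ⟨k, hk⟩
        have hkne : (0 : ℕ) < (k : ℕ) := by
          rcases Nat.eq_zero_or_pos (k : ℕ) with h0 | h0
          · exfalso
            have : k = ⟨0, hd⟩ := by apply Fin.ext; simp only [Fin.val_mk]; omega
            rw [this, hy0] at hk; omega
          · exact h0
        refine ⟨⟨(k : ℕ) - 1, by omega⟩, ?_⟩
        simp only [rot, dif_pos hd, if_pos hy0]
        rw [dif_pos (by omega : (k:ℕ) - 1 + 1 < d)]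
        have : (⟨(k:ℕ) - 1 + 1, by omega⟩ : Fin d) = k := by apply Fin.ext; simp; omega
        rw [this, hk]; omega
  · have h2 : ∀ k, 2 ≤ y k := by
      intro k
      have h0 := h1 ⟨0, hd⟩
      rcases Nat.lt_or_ge (k : ℕ) 1 with hk | hk
      · have : k = ⟨0, hd⟩ := by apply Fin.ext; simp only [Fin.val_mk]; omega
        subst this; omega
      · have := hm (a := ⟨0, hd⟩) (b := k) (by rw [Fin.lt_def]; simp only [Fin.val_mk]; omega)
        omega
    rcases eq_or_lt_of_le hv2 with hv | hv
    · subst hv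
      rw [Nat.mod_self]
      constructor
      · rintro ⟨k, hk⟩
        simp only [rot, dif_pos hd, if_neg hy0] at hk
        exact absurd hk (by have := hN k; omega)
      · rintro ⟨k, hk⟩
        exact absurd hk (by have := h2 k; omega)
    · rw [Nat.mod_eq_of_lt hv]
      simp only [rot, dif_pos hd, if_neg hy0]
      constructor
      · rintro ⟨k, hk⟩
        exact ⟨k, by have := h2 k; omega⟩
      · rintro ⟨k, hk⟩
        exact ⟨k, by omega⟩

end Stmt3Aux

namespace Stmt3Aux

/-- Boolean: is step `i+1` (periodically) a horizontal step of `x`? -/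
def hb (n d : ℕ) (x : Fin d → ℕ) (i : ℕ) : Bool := decide (∃ k, x k = i % (n + d) + 1)

/-- number of horizontal steps in the window `[j, j+m)` of the periodized word -/
def W (n d : ℕ) (x : Fin d → ℕ) (j m : ℕ) : ℕ :=
  ∑ i ∈ Finset.range m, (hb n d x (i + j)).toNat

def A (n d : ℕ) (x : Fin d → ℕ) (m : ℕ) : ℕ :=
  ∑ i ∈ Finset.range m, (hb n d x i).toNat

def Sf (n d : ℕ) (x : Fin d → ℕ) (m : ℕ) : ℤ :=
  (n + d : ℤ) * A n d x m - d * m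

variable {x : Fin d → ℕ}

lemma hb_iff (i : ℕ) : hb n d x i = true ↔ ∃ k, x k = i % (n + d) + 1 := by
  simp [hb]

lemma hb_congr {i i' : ℕ} (hii : i % (n + d) = i' % (n + d)) :
    hb n d x i = hb n d x i' := by
  unfold hb; rw [hii]

lemma hb_period (i : ℕ) : hb n d x ((n + d) + i) = hb n d x i :=
  hb_congr (Nat.add_mod_left _ _)

lemma A_add (j m : ℕ) : A n d x (j + m) = A n d x j + W n d x j m := by
  induction m with
  | zero => simp [W]
  | succ m ih =>
      rw [show j + (m + 1) = (j + m) + 1 from rfl]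
      unfold A W at *
      rw [Finset.sum_range_succ, ih, Finset.sum_range_succ, Nat.add_comm j m]
      ring

lemma toNat_eq (b : Bool) : b.toNat = if b = true then 1 else 0 := by cases b <;> rfl

lemma W_zero_period (hd : 0 < d) (hx : IsLatticePath n d x) :
    W n d x 0 (n + d) = d := by
  obtain ⟨hm, h1, hN⟩ := hx
  unfold W
  simp only [Nat.add_zero]
  rw [Finset.sum_congr rfl fun i _ => toNat_eq _, Finset.sum_boole, Nat.cast_id]
  have key : (Finset.univ : Finset (Fin d)).card
      = ((Finset.range (n + d)).filter fun i => hb n d x i = true).card := by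
    apply Finset.card_bij (fun (k : Fin d) _ => x k - 1)
    · intro k _
      rw [Finset.mem_filter, Finset.mem_range]
      have hk1 := h1 k; have hkN := hN k
      refine ⟨by omega, ?_⟩
      rw [hb_iff]
      refine ⟨k, ?_⟩
      rw [Nat.mod_eq_of_lt (by omega)]
      omega
    · intro a _ b _ hab
      have := h1 a; have := h1 b
      exact hm.injective (by omega)
    · intro i hi
      rw [Finset.mem_filter, Finset.mem_range, hb_iff] at hi
      obtain ⟨hiN, k, hk⟩ := hi
      rw [Nat.mod_eq_of_lt hiN] at hk
      exact ⟨k, Finset.mem_univ k, by omega⟩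
  rw [Finset.card_univ, Fintype.card_fin] at key
  exact key.symm

lemma W_period (hd : 0 < d) (hx : IsLatticePath n d x) (m : ℕ) :
    W n d x m (n + d) = d := by
  induction m with
  | zero => exact W_zero_period hd hx
  | succ m ih =>
      have h1 : W n d x m ((n + d) + 1)
          = W n d x m (n + d) + (hb n d x ((n + d) + m)).toNat := by
        unfold W; rw [Finset.sum_range_succ]
      have h2 : W n d x m ((n + d) + 1)
          = (hb n d x m).toNat + W n d x (m + 1) (n + d) := by
        unfold W
        rw [Finset.sum_range_succ']
        have : ∀ i, (hb n d x ((i + 1) + m)).toNat = (hb n d x (i + (m + 1))).toNat := by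
          intro i; rw [show (i + 1) + m = i + (m + 1) by omega]
        rw [Finset.sum_congr rfl fun i _ => this i]
        simp only [Nat.zero_add]
        omega
      rw [hb_period] at h1
      omega

lemma A_period (m : ℕ) (hd : 0 < d) (hx : IsLatticePath n d x) :
    A n d x (m + (n + d)) = A n d x m + d := by
  rw [A_add, W_period hd hx]

lemma Sf_period (hd : 0 < d) (hx : IsLatticePath n d x) (m : ℕ) :
    Sf n d x (m + (n + d)) = Sf n d x m := by
  unfold Sf
  rw [A_period m hd hx]
  push_cast
  ring

lemma Sf_mod (hd : 0 < d) (hx : IsLatticePath n d x) (a : ℕ) :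
    Sf n d x a = Sf n d x (a % (n + d)) := by
  conv_lhs => rw [← Nat.mod_add_div a (n + d)]
  generalize a / (n + d) = q
  induction q with
  | zero => simp
  | succ q ih =>
      rw [show a % (n + d) + (n + d) * (q + 1) = (a % (n + d) + (n + d) * q) + (n + d) by ring,
        Sf_period hd hx, ih]

end Stmt3Aux

namespace Stmt3Aux

variable {n d : ℕ} {x : Fin d → ℕ}

lemma iter_path (hd : 0 < d) (hx : IsLatticePath n d x) (j : ℕ) :
    IsLatticePath n d ((rot n d)^[j] x) := by
  induction j with
  | zero => exact hx
  | succ j ih => rw [Function.iterate_succ_apply']; exact rot_path hd ih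

lemma iter_mem (hd : 0 < d) (hx : IsLatticePath n d x) (j : ℕ)
    {v : ℕ} (hv1 : 1 ≤ v) (hv2 : v ≤ n + d) :
    (∃ k, (rot n d)^[j] x k = v) ↔ hb n d x (v - 1 + j) = true := by
  induction j generalizing v with
  | zero =>
      rw [Function.iterate_zero_apply, hb_iff, Nat.add_zero,
        Nat.mod_eq_of_lt (by omega), show v - 1 + 1 = v by omega]
  | succ j ih =>
      rw [Function.iterate_succ_apply',
        rot_mem hd (iter_path hd hx j) hv1 hv2]
      have hlt : v % (n + d) < n + d := Nat.mod_lt _ (by omega)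
      rw [ih (by omega) (by omega)]
      have : hb n d x (v % (n + d) + 1 - 1 + j) = hb n d x (v - 1 + (j + 1)) := by
        apply hb_congr
        rw [show v % (n + d) + 1 - 1 + j = v % (n + d) + j by omega,
          show v - 1 + (j + 1) = v + j by omega, Nat.mod_add_mod]
      rw [this]

end Stmt3Aux

namespace Stmt3Aux

variable {n d : ℕ} {x : Fin d → ℕ}

/-- the number of horizontal steps among the first `m` steps -/
def cnt (d : ℕ) (y : Fin d → ℕ) (m : ℕ) : ℕ :=
  (Finset.univ.filter fun k : Fin d => y k ≤ m).card

lemma cnt_iff {y : Fin d → ℕ} (hy : IsLatticePath n d y) (m : ℕ) (k : Fin d) :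
    y k ≤ m ↔ (k : ℕ) < cnt d y m := by
  obtain ⟨hmono, h1, hN⟩ := hy
  constructor
  · intro hk
    have hsub : Finset.Iic k ⊆ Finset.univ.filter (fun k' => y k' ≤ m) := by
      intro k' hk'
      simp only [Finset.mem_Iic] at hk'
      simp only [Finset.mem_filter, Finset.mem_univ, true_and]
      exact le_trans (hmono.monotone hk') hk
    have := Finset.card_le_card hsub
    rw [Fin.card_Iic] at this
    unfold cnt
    omega
  · intro hk
    by_contra hyk
    push_neg at hyk
    have hsub : Finset.univ.filter (fun k' => y k' ≤ m) ⊆ Finset.Iio k := by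
      intro k' hk'
      simp only [Finset.mem_filter, Finset.mem_univ, true_and] at hk'
      rw [Finset.mem_Iio]
      by_contra h'
      push_neg at h'
      have := hmono.monotone h'
      omega
    have := Finset.card_le_card hsub
    rw [Fin.card_Iio] at this
    unfold cnt at hk
    omega

lemma dyck_cond_iff {y : Fin d → ℕ} (hy : IsLatticePath n d y) (j : Fin d) :
    d * (y j - ((j : ℕ) + 1)) ≤ n * (j : ℕ) ↔
      d * y j ≤ (n + d) * (j : ℕ) + d := by
  have hj := le_apply hy j
  rw [Nat.mul_sub d (y j) ((j : ℕ) + 1), tsub_le_iff_right]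
  constructor
  · intro hle
    calc d * y j ≤ n * (j : ℕ) + d * ((j : ℕ) + 1) := hle
    _ = (n + d) * (j : ℕ) + d := by ring
  · intro hle
    calc d * y j ≤ (n + d) * (j : ℕ) + d := hle
    _ = n * (j : ℕ) + d * ((j : ℕ) + 1) := by ring

lemma dyck_iff {y : Fin d → ℕ} (hd : 0 < d) (hy : IsLatticePath n d y) :
    (∀ j : Fin d, d * (y j - ((j : ℕ) + 1)) ≤ n * (j : ℕ)) ↔
      (∀ m, m ≤ n + d → d * m ≤ (n + d) * cnt d y m) := by
  constructor
  · intro hDyck m hm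
    rcases Nat.lt_or_ge (cnt d y m) d with hlt | hge
    · set k : Fin d := ⟨cnt d y m, hlt⟩ with hk
      have hym : m < y k := by
        by_contra h'
        push_neg at h'
        have := (cnt_iff hy m k).mp h'
        simp [hk] at this
      have h2 := (dyck_cond_iff hy k).mp (hDyck k)
      have h6 : ((k : ℕ)) = cnt d y m := by rw [hk]
      rw [h6] at h2
      have h3 : d * m ≤ d * (y k - 1) := Nat.mul_le_mul_left d (by omega)
      have h4 : d * (y k - 1) = d * y k - d := by
        rw [Nat.mul_sub d (y k) 1, Nat.mul_one]
      have h5 : (k : ℕ) = cnt d y m := rfl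
      have h1 := hy.2.1 k
      have hd1 : d * 1 ≤ d * y k := Nat.mul_le_mul_left d h1
      omega
    · calc d * m ≤ d * (n + d) := Nat.mul_le_mul_left d hm
      _ = (n + d) * d := by ring
      _ ≤ (n + d) * cnt d y m := Nat.mul_le_mul_left _ hge
  · intro hmin j
    rw [dyck_cond_iff hy j]
    have hyj1 := hy.2.1 j
    have hyjN := hy.2.2 j
    have hcnt : cnt d y (y j - 1) = (j : ℕ) := by
      have hle : cnt d y (y j - 1) ≤ (j : ℕ) := by
        by_contra h'
        push_neg at h'
        have := (cnt_iff hy (y j - 1) j).mpr h'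
        omega
      rcases Nat.lt_or_ge (cnt d y (y j - 1)) (j : ℕ) with hlt | hge
      · exfalso
        set k : Fin d := ⟨cnt d y (y j - 1), by omega⟩ with hk
        have hkj : k < j := by rw [Fin.lt_def]; exact hlt
        have : y k ≤ y j - 1 := by
          have := hy.1 hkj
          omega
        have := (cnt_iff hy (y j - 1) k).mp this
        simp [hk] at this
      · omega
    have := hmin (y j - 1) (by omega)
    rw [hcnt] at this
    have : d * (y j - 1) ≤ (n + d) * (j : ℕ) := this
    have h4 : d * (y j - 1) = d * y j - d := by
      rw [Nat.mul_sub d (y j) 1, Nat.mul_one]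
    have hd1 : d * 1 ≤ d * y j := Nat.mul_le_mul_left d hyj1
    omega

lemma cnt_eq_W (hd : 0 < d) (hx : IsLatticePath n d x) (j m : ℕ) (hm : m ≤ n + d) :
    cnt d ((rot n d)^[j] x) m = W n d x j m := by
  have hxj := iter_path hd hx j
  obtain ⟨hmono, h1, hN⟩ := hxj
  unfold W
  rw [Finset.sum_congr rfl fun i _ => toNat_eq _, Finset.sum_boole, Nat.cast_id]
  unfold cnt
  apply Finset.card_bij (fun (k : Fin d) _ => (rot n d)^[j] x k - 1)
  · intro k hk
    simp only [Finset.mem_filter, Finset.mem_univ, true_and] at hk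
    have hk1 := h1 k
    rw [Finset.mem_filter, Finset.mem_range]
    refine ⟨by omega, ?_⟩
    exact (iter_mem hd hx j (v := (rot n d)^[j] x k) hk1 (le_trans hk hm)).mp ⟨k, rfl⟩
  · intro a _ b _ hab
    have := h1 a; have := h1 b
    exact hmono.injective (by omega)
  · intro i hi
    rw [Finset.mem_filter, Finset.mem_range] at hi
    obtain ⟨him, hbi⟩ := hi
    have := (iter_mem hd hx j (v := i + 1) (by omega) (by omega)).mpr
      (by rw [show i + 1 - 1 + j = i + j by omega]; exact hbi)
    obtain ⟨k, hk⟩ := this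
    refine ⟨k, ?_, by omega⟩
    rw [Finset.mem_filter]
    exact ⟨Finset.mem_univ k, by omega⟩

end Stmt3Aux


namespace Stmt3Aux

variable {n d : ℕ} {x : Fin d → ℕ}

lemma sf_window (j m : ℕ) :
    Sf n d x (j + m) = Sf n d x j + ((n + d : ℤ) * W n d x j m - d * m) := by
  unfold Sf
  rw [A_add]
  push_cast
  ring

lemma dyck_iff_min (hn : 0 < n) (hd : 0 < d) (hx : IsLatticePath n d x) (j : ℕ) :
    InDyck n d ((rot n d)^[j] x) ↔
      ∀ m, m ≤ n + d → Sf n d x j ≤ Sf n d x (j + m) := by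
  unfold InDyck
  rw [and_iff_right (iter_path hd hx j), dyck_iff hd (iter_path hd hx j)]
  constructor
  · intro H m hm
    have h1 := H m hm
    rw [cnt_eq_W hd hx j m hm] at h1
    have h2 : (d * m : ℤ) ≤ (n + d : ℤ) * W n d x j m := by exact_mod_cast h1
    rw [sf_window j m]
    linarith
  · intro H m hm
    have h1 := H m hm
    rw [sf_window j m] at h1
    rw [cnt_eq_W hd hx j m hm]
    have h2 : (d * m : ℤ) ≤ (n + d : ℤ) * W n d x j m := by linarith
    exact_mod_cast h2

theorem stmt3 (n d : ℕ) (hn : 0 < n) (hd : 0 < d) (h : Nat.gcd n d = 1)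
    (x : Fin d → ℕ) (hx : IsLatticePath n d x) :
    ∃! k : ℕ, k ≤ n + d - 1 ∧ InDyck n d ((rot n d)^[k] x) := by
  obtain ⟨j, hjmem, hjmin⟩ := Finset.exists_min_image (Finset.range (n + d))
    (Sf n d x) ⟨0, Finset.mem_range.mpr (by omega)⟩
  rw [Finset.mem_range] at hjmem
  have hmin' : ∀ i, Sf n d x j ≤ Sf n d x i := by
    intro i
    rw [Sf_mod hd hx i]
    exact hjmin _ (Finset.mem_range.mpr (Nat.mod_lt _ (by omega)))
  have hinj : ∀ i i', i < n + d → i' < n + d → Sf n d x i = Sf n d x i' → i = i' := by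
    have H : ∀ a b, a ≤ b → b < n + d → Sf n d x a = Sf n d x b → a = b := by
      intro a b hab hb heq2
      have hA : A n d x b = A n d x a + W n d x a (b - a) := by
        rw [← A_add, Nat.add_sub_cancel' hab]
      have hZ : ((n : ℤ) + d) * (W n d x a (b - a)) = d * ((b : ℤ) - a) := by
        unfold Sf at heq2
        rw [hA] at heq2
        push_cast at heq2 ⊢
        linarith
      have hNat : (n + d) * W n d x a (b - a) = d * (b - a) := by
        apply @Nat.cast_injective ℤ
        push_cast [Nat.cast_sub hab]
        linarith [hZ]
      have hco : Nat.Coprime (n + d) d := Nat.coprime_add_self_left.mpr h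
      have hdvd : (n + d) ∣ (b - a) * d := ⟨W n d x a (b - a), by rw [Nat.mul_comm, ← hNat]⟩
      have hdvd2 := Nat.Coprime.dvd_of_dvd_mul_right hco hdvd
      have : b - a = 0 := Nat.eq_zero_of_dvd_of_lt hdvd2 (by omega)
      omega
    intro i i' hi hi' heq
    rcases le_total i i' with hle | hle
    · exact H i i' hle hi' heq
    · exact (H i' i hle hi heq.symm).symm
  refine ⟨j, ⟨by omega, ?_⟩, ?_⟩
  · rw [dyck_iff_min hn hd hx j]
    intro m _
    exact hmin' (j + m)
  · rintro k ⟨hk, hkdyck⟩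
    have hk' : k < n + d := by omega
    rw [dyck_iff_min hn hd hx k] at hkdyck
    have hkmin : ∀ i, i < n + d → Sf n d x k ≤ Sf n d x i := by
      intro i hi
      rcases le_or_gt k i with hle | hlt
      · have := hkdyck (i - k) (by omega)
        rwa [Nat.add_sub_cancel' hle] at this
      · have := hkdyck (i + (n + d) - k) (by omega)
        rw [show k + (i + (n + d) - k) = i + (n + d) by omega, Sf_period hd hx] at this
        exact this
    exact hinj k j hk' hjmem (le_antisymm (hkmin j hjmem) (hmin' k))

end Stmt3Aux

/-- if `gcd(n,d) = 1`, every rotation orbit in `L_{d,n}` contains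
exactly one rational `(d,n)`-Dyck path. -/
theorem stmt3 (n d : ℕ) (hn : 0 < n) (hd : 0 < d) (h : Nat.gcd n d = 1)
    (x : Fin d → ℕ) (hx : IsLatticePath n d x) :
    ∃! k : ℕ, k ≤ n + d - 1 ∧ InDyck n d ((rot n d)^[k] x) := by
  exact Stmt3Aux.stmt3 n d hn hd h x hx
end

section
/- Let n and d be positive integers with gcd(n,d) = 1. Then (n+d)·|Dyck_{d,n}| = binomial(n+d, d); in particular n+d divides binomial(n+d, d) and the number of rational (d,n)-Dyck paths is binomial(n+d,d)/(n+d). -/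
namespace Stmt4

def wt (n d : ℕ) (b : Bool) : ℤ := if b then (n : ℤ) else -(d : ℤ)

/-- periodic extension of a word -/
def extw {m : ℕ} (w : Fin m → Bool) (i : ℕ) : Bool :=
  if h : i % m < m then w ⟨i % m, h⟩ else false

def S (n d : ℕ) {m : ℕ} (w : Fin m → Bool) (j : ℕ) : ℤ :=
  ∑ i ∈ Finset.range j, wt n d (extw w i)

def cnt {m : ℕ} (w : Fin m → Bool) : ℕ :=
  (Finset.univ.filter (fun i => w i = true)).card

def rotw {m : ℕ} (t : Fin m) (w : Fin m → Bool) : Fin m → Bool := fun i => w (i + t)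

lemma extw_add {m : ℕ} (w : Fin m → Bool) (i : ℕ) : extw w (i + m) = extw w i := by
  simp [extw, Nat.add_mod_right]

lemma extw_lt {m : ℕ} (w : Fin m → Bool) (i : ℕ) (h : i < m) : extw w i = w ⟨i, h⟩ := by
  simp [extw, Nat.mod_eq_of_lt h, h]

lemma extw_rotw {m : ℕ} (t : Fin m) (w : Fin m → Bool) (i : ℕ) :
    extw (rotw t w) i = extw w (i + t.val) := by
  rcases Nat.eq_zero_or_pos m with hm | hm
  · exact absurd t.isLt (by omega)
  · have h1 : i % m < m := Nat.mod_lt _ hm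
    have h2 : (i + t.val) % m < m := Nat.mod_lt _ hm
    rw [extw, dif_pos h1, extw, dif_pos h2]
    show w (⟨i % m, h1⟩ + t) = _
    apply congrArg
    apply Fin.ext
    simp [Fin.add_def, Nat.mod_add_mod]

lemma S_succ (n d : ℕ) {m : ℕ} (w : Fin m → Bool) (j : ℕ) :
    S n d w (j + 1) = S n d w j + wt n d (extw w j) := by
  simp [S, Finset.sum_range_succ]

lemma S_rotw (n d : ℕ) {m : ℕ} (t : Fin m) (w : Fin m → Bool) (j : ℕ) :
    S n d (rotw t w) j = S n d w (t.val + j) - S n d w t.val := by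
  induction j with
  | zero => simp [S]
  | succ j ih =>
    rw [S_succ, ih, extw_rotw, Nat.add_comm j t.val, ← Nat.add_assoc, S_succ]
    ring

lemma S_m (n d : ℕ) (w : Fin (n + d) → Bool) (hc : cnt w = d) :
    S n d w (n + d) = 0 := by
  have : S n d w (n + d) = ∑ i : Fin (n + d), wt n d (w i) := by
    rw [S, Finset.sum_range fun i => wt n d (extw w i)]
    · apply Finset.sum_congr rfl
      intro i _
      rw [extw_lt w i.val i.isLt]
  rw [this]
  rw [← Finset.sum_filter_add_sum_filter_not Finset.univ (fun i => w i = true)]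
  have h1 : ∀ i ∈ Finset.univ.filter (fun i : Fin (n+d) => w i = true), wt n d (w i) = (n : ℤ) := by
    intro i hi; simp at hi; simp [wt, hi]
  have h2 : ∀ i ∈ Finset.univ.filter (fun i : Fin (n+d) => ¬ (w i = true)), wt n d (w i) = -(d : ℤ) := by
    intro i hi; simp at hi; simp [wt, hi]
  rw [Finset.sum_congr rfl h1, Finset.sum_congr rfl h2]
  simp only [Finset.sum_const, nsmul_eq_mul]
  have hcard : (Finset.univ.filter (fun i : Fin (n+d) => ¬ (w i = true))).card = n := by
    have := Finset.card_filter_add_card_filter_not (s := (Finset.univ : Finset (Fin (n+d)))) (p := fun i => w i = true)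
    simp only [Finset.card_univ, Fintype.card_fin] at this
    unfold cnt at hc
    omega
  have hc' : (Finset.univ.filter (fun i : Fin (n+d) => w i = true)).card = d := hc
  rw [hc', hcard]
  ring


lemma S_zero (n d : ℕ) {m : ℕ} (w : Fin m → Bool) : S n d w 0 = 0 := by simp [S]

lemma S_period (n d : ℕ) (w : Fin (n + d) → Bool) (hc : cnt w = d) (j : ℕ) :
    S n d w (j + (n + d)) = S n d w j := by
  induction j with
  | zero => simpa [S_zero] using S_m n d w hc
  | succ j ih =>
    have : j + 1 + (n + d) = (j + (n + d)) + 1 := by omega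
    rw [this, S_succ, ih, extw_add, S_succ]

lemma S_mod (n d : ℕ) (w : Fin (n + d) → Bool) (hc : cnt w = d) (j : ℕ) :
    S n d w j = S n d w (j % (n + d)) := by
  induction j using Nat.strong_induction_on with
  | _ j ih =>
    rcases Nat.eq_zero_or_pos (n + d) with h0 | h0
    · simp [h0]
    by_cases hj : j < n + d
    · rw [Nat.mod_eq_of_lt hj]
    · have h1 : j = (j - (n + d)) + (n + d) := by omega
      rw [h1, S_period n d w hc, ih (j - (n + d)) (by omega), Nat.add_mod_right]

lemma S_eq_imp (n d : ℕ) (h : Nat.gcd n d = 1) (w : Fin (n + d) → Bool) {i j : ℕ}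
    (hij : i ≤ j) (heq : S n d w i = S n d w j) : (n + d) ∣ (j - i) := by
  have hsub : ∑ k ∈ Finset.Ico i j, wt n d (extw w k) = S n d w j - S n d w i := by
    rw [S, S, ← Finset.sum_Ico_eq_sub _ hij]
  set t := (Finset.Ico i j).filter (fun k => extw w k = true) with ht
  have hsplit : ∑ k ∈ Finset.Ico i j, wt n d (extw w k)
      = (t.card : ℤ) * n + ((j - i - t.card : ℕ) : ℤ) * (-(d : ℤ)) := by
    rw [← Finset.sum_filter_add_sum_filter_not (Finset.Ico i j) (fun k => extw w k = true)]
    have h1 : ∀ k ∈ (Finset.Ico i j).filter (fun k => extw w k = true), wt n d (extw w k) = (n : ℤ) := by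
      intro k hk; simp at hk; simp [wt, hk.2]
    have h2 : ∀ k ∈ (Finset.Ico i j).filter (fun k => ¬ (extw w k = true)), wt n d (extw w k) = -(d : ℤ) := by
      intro k hk; simp at hk; simp [wt, hk.2]
    rw [Finset.sum_congr rfl h1, Finset.sum_congr rfl h2]
    simp only [Finset.sum_const, nsmul_eq_mul]
    have hcard : ((Finset.Ico i j).filter (fun k => ¬ (extw w k = true))).card = j - i - t.card := by
      rw [Finset.filter_not, Finset.card_sdiff_of_subset (Finset.filter_subset _ _), Nat.card_Ico, ht]
    rw [hcard]
  have htle : t.card ≤ j - i := by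
    rw [← Nat.card_Ico i j]; exact Finset.card_filter_le _ _
  have key : (n + d) * t.card = d * (j - i) := by
    have : ((t.card : ℤ)) * n + ((j - i - t.card : ℕ) : ℤ) * (-(d : ℤ)) = 0 := by
      rw [← hsplit, hsub, heq]; ring
    have hcast : ((j - i - t.card : ℕ) : ℤ) = ((j - i : ℕ) : ℤ) - (t.card : ℤ) := by
      push_cast [htle]; ring
    rw [hcast] at this
    have : ((n + d) * t.card : ℤ) = (d : ℤ) * ((j - i : ℕ) : ℤ) := by push_cast; linarith
    exact_mod_cast this
  have hdvd : (n + d) ∣ (j - i) * d := by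
    exact ⟨t.card, by rw [Nat.mul_comm (j-i) d, ← key]⟩
  have hcop : Nat.Coprime (n + d) d := by
    exact Nat.coprime_add_self_left.mpr h
  exact hcop.dvd_of_dvd_mul_right hdvd

def Good (n d : ℕ) (w : Fin (n + d) → Bool) : Prop :=
  cnt w = d ∧ ∀ j, 0 ≤ S n d w j

lemma rotw_rotw {m : ℕ} [NeZero m] (a b : Fin m) (w : Fin m → Bool) :
    rotw a (rotw b w) = rotw (b + a) w := by
  funext i
  simp only [rotw]
  rw [add_assoc, add_comm a b]

lemma rotw_zero {m : ℕ} [NeZero m] (w : Fin m → Bool) : rotw 0 w = w := by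
  funext i; simp [rotw]

lemma cnt_rotw {m : ℕ} (t : Fin m) (w : Fin m → Bool) : cnt (rotw t w) = cnt w := by
  haveI : NeZero m := ⟨by rcases t with ⟨v, hv⟩; omega⟩
  unfold cnt
  rw [Finset.card_filter, Finset.card_filter]
  exact Fintype.sum_equiv (Equiv.addRight t) _ _ (fun i => rfl)

lemma good_rot_eq (n d : ℕ) (h : Nat.gcd n d = 1) (w : Fin (n + d) → Bool) (t : Fin (n + d))
    (hw : Good n d w) (ht : Good n d (rotw t w)) : t.val = 0 := by
  have h1 := ht.2 (n + d - t.val)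
  rw [S_rotw] at h1
  have h2 : t.val + (n + d - t.val) = n + d := by omega
  rw [h2, S_m n d w hw.1] at h1
  have h3 : S n d w t.val = 0 := le_antisymm (by linarith) (hw.2 t.val)
  have h4 : (n + d) ∣ t.val := by
    simpa using S_eq_imp n d h w (Nat.zero_le t.val) (by rw [S_zero, h3])
  exact Nat.eq_zero_of_dvd_of_lt h4 t.isLt

lemma exists_good_rot (n d : ℕ) (hpos : 0 < n + d) (w : Fin (n + d) → Bool)
    (hc : cnt w = d) : ∃ t, Good n d (rotw t w) := by
  haveI : NeZero (n + d) := ⟨by omega⟩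
  obtain ⟨t, htm, hmin⟩ := Finset.exists_min_image (Finset.range (n + d)) (S n d w)
    ⟨0, by simp [hpos]⟩
  rw [Finset.mem_range] at htm
  refine ⟨⟨t, htm⟩, ?_, ?_⟩
  · rw [cnt_rotw]; exact hc
  · intro j
    rw [S_rotw]
    have : S n d w (t + j) = S n d w ((t + j) % (n + d)) := S_mod n d w hc _
    rw [this]
    have hm : (t + j) % (n + d) ∈ Finset.range (n + d) := by
      simp [Nat.mod_lt _ hpos]
    linarith [hmin _ hm]


lemma S_formula (n d : ℕ) {m : ℕ} (w : Fin m → Bool) (j : ℕ) :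
    S n d w j = (((Finset.range j).filter (fun i => extw w i = true)).card : ℤ) * n
      - ((j : ℤ) - (((Finset.range j).filter (fun i => extw w i = true)).card : ℤ)) * d := by
  rw [S, ← Finset.sum_filter_add_sum_filter_not (Finset.range j) (fun i => extw w i = true)]
  have h1 : ∀ i ∈ (Finset.range j).filter (fun i => extw w i = true), wt n d (extw w i) = (n : ℤ) := by
    intro i hi; simp at hi; simp [wt, hi.2]
  have h2 : ∀ i ∈ (Finset.range j).filter (fun i => ¬ (extw w i = true)), wt n d (extw w i) = -(d : ℤ) := by
    intro i hi; simp at hi; simp [wt, hi.2]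
  rw [Finset.sum_congr rfl h1, Finset.sum_congr rfl h2]
  simp only [Finset.sum_const, nsmul_eq_mul]
  have hcard : ((Finset.range j).filter (fun i => ¬ (extw w i = true))).card
      = j - ((Finset.range j).filter (fun i => extw w i = true)).card := by
    rw [Finset.filter_not, Finset.card_sdiff_of_subset (Finset.filter_subset _ _), Finset.card_range]
  have hcle : ((Finset.range j).filter (fun i => extw w i = true)).card ≤ j := by
    calc _ ≤ (Finset.range j).card := Finset.card_filter_le _ _
    _ = j := Finset.card_range j
  rw [hcard, Nat.cast_sub hcle]
  ring

/-- the boolean word of a path -/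
def wx (n d : ℕ) (x : Fin d → ℕ) : Fin (n + d) → Bool :=
  fun i => decide (∃ k, x k = (i : ℕ) + 1)

lemma lb {d : ℕ} (x : Fin d → ℕ) (hs : StrictMono x) (h1 : ∀ k, 1 ≤ x k) :
    ∀ v (hv : v < d), v + 1 ≤ x ⟨v, hv⟩ := by
  intro v
  induction v with
  | zero => intro hv; simpa using h1 ⟨0, hv⟩
  | succ v ih =>
    intro hv
    have h2 := hs (show (⟨v, by omega⟩ : Fin d) < ⟨v+1, hv⟩ from by simp [Fin.lt_def])
    have h3 := ih (by omega)
    omega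

lemma cnt_range_wx (n d : ℕ) (x : Fin d → ℕ) (hlp : IsLatticePath n d x) {j : ℕ}
    (hj : j ≤ n + d) :
    ((Finset.range j).filter (fun i => extw (wx n d x) i = true)).card
      = (Finset.univ.filter (fun k : Fin d => x k ≤ j)).card := by
  obtain ⟨hs, h1, h2⟩ := hlp
  symm
  apply Finset.card_bij (fun k _ => x k - 1)
  · intro k hk
    simp only [Finset.mem_filter, Finset.mem_univ, true_and] at hk
    have hk1 := h1 k
    have hk2 := h2 k
    simp only [Finset.mem_filter, Finset.mem_range]
    constructor
    · omega
    · rw [extw_lt _ _ (by omega : x k - 1 < n + d)]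
      simp only [wx, decide_eq_true_eq]
      exact ⟨k, by omega⟩
  · intro a ha b hb hab
    have := h1 a; have := h1 b
    exact hs.injective (by omega)
  · intro i hi
    simp only [Finset.mem_filter, Finset.mem_range] at hi
    obtain ⟨hij, hit⟩ := hi
    rw [extw_lt _ _ (by omega : i < n + d)] at hit
    simp only [wx, decide_eq_true_eq] at hit
    obtain ⟨k, hk⟩ := hit
    exact ⟨k, by simp only [Finset.mem_filter, Finset.mem_univ, true_and]; omega, by omega⟩

lemma cnt_wx (n d : ℕ) (x : Fin d → ℕ) (hlp : IsLatticePath n d x) :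
    cnt (wx n d x) = d := by
  obtain ⟨hs, h1, h2⟩ := hlp
  have key : (Finset.univ : Finset (Fin d)).card
      = (Finset.univ.filter (fun i : Fin (n + d) => wx n d x i = true)).card := by
    apply Finset.card_bij (fun (k : Fin d) _ => (⟨x k - 1, by have := h1 k; have := h2 k; omega⟩ : Fin (n + d)))
    · intro k hk
      simp only [Finset.mem_filter, Finset.mem_univ, true_and, wx, decide_eq_true_eq]
      exact ⟨k, by have := h1 k; omega⟩
    · intro a ha b hb hab
      have := h1 a; have := h1 b
      rw [Fin.mk.injEq] at hab
      exact hs.injective (by omega)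
    · intro i hi
      simp only [Finset.mem_filter, Finset.mem_univ, true_and, wx, decide_eq_true_eq] at hi
      obtain ⟨k, hk⟩ := hi
      exact ⟨k, Finset.mem_univ k, by apply Fin.ext; simp; omega⟩
  unfold cnt
  rw [← key]
  simp

lemma S_wx (n d : ℕ) (x : Fin d → ℕ) (hlp : IsLatticePath n d x) {j : ℕ} (hj : j ≤ n + d) :
    S n d (wx n d x) j = ((Finset.univ.filter (fun k : Fin d => x k ≤ j)).card : ℤ) * n
      - ((j : ℤ) - ((Finset.univ.filter (fun k : Fin d => x k ≤ j)).card : ℤ)) * d := by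
  rw [S_formula, cnt_range_wx n d x hlp hj]

lemma good_wx (n d : ℕ) (x : Fin d → ℕ) (hx : InDyck n d x) : Good n d (wx n d x) := by
  obtain ⟨hlp, hdy⟩ := hx
  obtain ⟨hs, h1, h2⟩ := hlp
  have hcnt : cnt (wx n d x) = d := cnt_wx n d x ⟨hs, h1, h2⟩
  refine ⟨hcnt, ?_⟩
  have key : ∀ j, j ≤ n + d → 0 ≤ S n d (wx n d x) j := by
    intro j hj
    rw [S_wx n d x ⟨hs, h1, h2⟩ hj]
    set hc := (Finset.univ.filter (fun k : Fin d => x k ≤ j)).card with hhc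
    have hcd : hc ≤ d := by
      calc hc ≤ (Finset.univ : Finset (Fin d)).card := Finset.card_filter_le _ _
      _ = d := by simp
    rcases lt_or_ge hc d with hlt | hge
    · -- x ⟨hc⟩ > j
      have hxgt : j + 1 ≤ x ⟨hc, hlt⟩ := by
        by_contra hcon
        push_neg at hcon
        have hsub : Finset.univ.filter (fun k' : Fin d => k' ≤ (⟨hc, hlt⟩ : Fin d))
            ⊆ Finset.univ.filter (fun k : Fin d => x k ≤ j) := by
          intro k hk
          simp only [Finset.mem_filter, Finset.mem_univ, true_and] at *
          exact le_trans (hs.monotone hk) (by omega)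
        have hcards := Finset.card_le_card hsub
        have : Finset.univ.filter (fun k' : Fin d => k' ≤ (⟨hc, hlt⟩ : Fin d)) = Finset.Iic (⟨hc, hlt⟩ : Fin d) := by
          ext k; simp
        rw [this, Fin.card_Iic] at hcards
        simp only [← hhc] at hcards
        omega
      have hdyk := hdy ⟨hc, hlt⟩
      simp only at hdyk
      have hlb := lb x hs h1 hc hlt
      have hdyk' : (d : ℤ) * ((x ⟨hc, hlt⟩ : ℤ) - (hc + 1)) ≤ (n : ℤ) * hc := by
        zify [hlb] at hdyk
        convert hdyk using 2 <;> push_cast <;> ring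
      have hmul : (d : ℤ) * ((j : ℤ) - hc) ≤ (d : ℤ) * ((x ⟨hc, hlt⟩ : ℤ) - (hc + 1)) := by
        apply mul_le_mul_of_nonneg_left _ (by positivity)
        have : (j : ℤ) + 1 ≤ (x ⟨hc, hlt⟩ : ℤ) := by exact_mod_cast hxgt
        linarith
      linarith
    · have hceq : hc = d := le_antisymm hcd hge
      rw [hceq]
      have : (j : ℤ) ≤ (n : ℤ) + d := by exact_mod_cast hj
      nlinarith [Nat.cast_nonneg (α := ℤ) d, Nat.cast_nonneg (α := ℤ) n]
  intro j
  rcases le_or_gt j (n + d) with hj | hj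
  · exact key j hj
  · rw [S_mod n d _ hcnt]
    rcases Nat.eq_zero_or_pos (n + d) with h0 | h0
    · have hd0 : d = 0 := by omega
      have hz : ∀ i, wt n d (extw (wx n d x) i) = 0 := by
        intro i
        rw [extw, dif_neg (by omega)]
        simp [wt, hd0]
      simp [S, hz]
    · exact key _ (le_of_lt (Nat.mod_lt _ h0))


lemma dyck_of_good (n d : ℕ) (w : Fin (n + d) → Bool) (hw : Good n d w) :
    ∃ x : Fin d → ℕ, InDyck n d x ∧ wx n d x = w := by
  classical
  set s := Finset.univ.filter (fun i : Fin (n + d) => w i = true) with hsdef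
  have hcard : s.card = d := hw.1
  set emb := s.orderEmbOfFin hcard with hembdef
  refine ⟨fun k => (emb k).val + 1, ?_, ?_⟩
  case refine_2 =>
    funext i
    have hiff : (∃ k, (emb k).val + 1 = (i : ℕ) + 1) ↔ w i = true := by
      constructor
      · rintro ⟨k, hk⟩
        have heq : emb k = i := Fin.ext (by omega)
        have hmem : i ∈ s := heq ▸ Finset.orderEmbOfFin_mem s hcard k
        simpa [hsdef] using hmem
      · intro hwi
        have hmem : (i : Fin (n + d)) ∈ (s : Set (Fin (n + d))) := by simp [hsdef, hwi]
        rw [← Finset.range_orderEmbOfFin s hcard] at hmem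
        obtain ⟨k, hk⟩ := hmem
        exact ⟨k, by rw [← hembdef] at hk; rw [hk]⟩
    show decide _ = w i
    cases hwi : w i with
    | false =>
      apply decide_eq_false
      intro hcon
      have := hiff.mp hcon
      rw [hwi] at this
      exact Bool.false_ne_true this
    | true => exact decide_eq_true (hiff.mpr hwi)
  case refine_1 =>
    have hsm : StrictMono (fun k => (emb k).val + 1) := by
      intro a b hab
      have := (s.orderEmbOfFin hcard).strictMono hab
      rw [← hembdef, Fin.lt_def] at this
      show (emb a).val + 1 < (emb b).val + 1
      omega
    have hlp : IsLatticePath n d (fun k => (emb k).val + 1) := by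
      refine ⟨hsm, fun k => by show 1 ≤ (emb k).val + 1; omega,
        fun k => by show (emb k).val + 1 ≤ n + d; have := (emb k).isLt; omega⟩
    refine ⟨hlp, ?_⟩
    intro k
    -- use the good condition at j = (emb k).val
    have hwxw : wx n d (fun k => (emb k).val + 1) = w := by
      -- same as refine_2; reuse by recomputing
      funext i
      have hiff : (∃ k, (emb k).val + 1 = (i : ℕ) + 1) ↔ w i = true := by
        constructor
        · rintro ⟨k, hk⟩
          have heq : emb k = i := Fin.ext (by omega)
          have hmem : i ∈ s := heq ▸ Finset.orderEmbOfFin_mem s hcard k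
          simpa [hsdef] using hmem
        · intro hwi
          have hmem : (i : Fin (n + d)) ∈ (s : Set (Fin (n + d))) := by simp [hsdef, hwi]
          rw [← Finset.range_orderEmbOfFin s hcard] at hmem
          obtain ⟨k, hk⟩ := hmem
          exact ⟨k, by rw [← hembdef] at hk; rw [hk]⟩
      show decide _ = w i
      cases hwi : w i with
      | false =>
        apply decide_eq_false
        intro hcon
        have := hiff.mp hcon
        rw [hwi] at this
        exact Bool.false_ne_true this
      | true => exact decide_eq_true (hiff.mpr hwi)
    set j := (emb k).val with hjdef
    have hjle : j ≤ n + d := le_of_lt (emb k).isLt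
    have hS := hw.2 j
    rw [← hwxw, S_wx n d _ hlp hjle] at hS
    have hcnt_eq : (Finset.univ.filter (fun k' : Fin d => (emb k').val + 1 ≤ j)).card = (k : ℕ) := by
      have hfe : Finset.univ.filter (fun k' : Fin d => (emb k').val + 1 ≤ j)
          = Finset.Iio k := by
        ext k'
        simp only [Finset.mem_filter, Finset.mem_univ, true_and, Finset.mem_Iio]
        constructor
        · intro hlt
          by_contra hge
          push_neg at hge
          have := (s.orderEmbOfFin hcard).monotone hge
          rw [← hembdef] at this
          have : (emb k).val ≤ (emb k').val := this
          omega
        · intro hlt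
          have := (s.orderEmbOfFin hcard).strictMono hlt
          rw [← hembdef, Fin.lt_def] at this
          omega
      rw [hfe, Fin.card_Iio]
    rw [hcnt_eq] at hS
    -- hS : 0 ≤ k * n - (j - k) * d; goal : d * ((emb k).val + 1 - (k+1)) ≤ n * k
    have hlbk : (k : ℕ) ≤ j := by
      have := lb (fun k => (emb k).val + 1) hsm (fun k => by show 1 ≤ (emb k).val + 1; omega) k.val k.isLt
      simp only [show (⟨k.val, k.isLt⟩ : Fin d) = k from rfl] at this
      omega
    zify [show (k : ℕ) + 1 ≤ (emb k).val + 1 by omega]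
    have hj' : ((emb k).val + 1 : ℤ) - ((k : ℕ) + 1) = (j : ℤ) - (k : ℕ) := by
      rw [hjdef]; push_cast; ring
    rw [hj']
    nlinarith [hS]

lemma wx_inj (n d : ℕ) (x x' : Fin d → ℕ) (hx : IsLatticePath n d x)
    (hx' : IsLatticePath n d x') (h : wx n d x = wx n d x') : x = x' := by
  classical
  obtain ⟨hs, h1, h2⟩ := hx
  obtain ⟨hs', h1', h2'⟩ := hx'
  set s := Finset.univ.filter (fun i : Fin (n + d) => wx n d x i = true) with hsdef
  have hcard : s.card = d := cnt_wx n d x ⟨hs, h1, h2⟩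
  have hb : ∀ k : Fin d, x k - 1 < n + d := fun k => by have := h1 k; have := h2 k; omega
  have hb' : ∀ k : Fin d, x' k - 1 < n + d := fun k => by have := h1' k; have := h2' k; omega
  have hf : (fun k : Fin d => (⟨x k - 1, hb k⟩ : Fin (n + d))) = ⇑(s.orderEmbOfFin hcard) := by
    apply Finset.orderEmbOfFin_unique hcard
    · intro k
      simp only [hsdef, Finset.mem_filter, Finset.mem_univ, true_and, wx, decide_eq_true_eq]
      exact ⟨k, by have := h1 k; omega⟩
    · intro a b hab
      have := hs hab
      have := h1 a
      rw [Fin.lt_def]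
      simp only
      omega
  have hf' : (fun k : Fin d => (⟨x' k - 1, hb' k⟩ : Fin (n + d))) = ⇑(s.orderEmbOfFin hcard) := by
    apply Finset.orderEmbOfFin_unique hcard
    · intro k
      rw [hsdef, Finset.mem_filter]
      refine ⟨Finset.mem_univ _, ?_⟩
      rw [h]
      simp only [wx, decide_eq_true_eq]
      exact ⟨k, by have := h1' k; omega⟩
    · intro a b hab
      have := hs' hab
      have := h1' a
      rw [Fin.lt_def]
      simp only
      omega
  funext k
  have e1 := congrFun hf k
  have e2 := congrFun hf' k
  rw [← e2, Fin.mk.injEq] at e1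
  have := h1 k; have := h1' k
  omega

lemma card_words (n d : ℕ) :
    Nat.card {w : Fin (n + d) → Bool // cnt w = d} = Nat.choose (n + d) d := by
  classical
  have e3 : {w : Fin (n + d) → Bool // cnt w = d} ≃ {s : Finset (Fin (n + d)) // s.card = d} :=
    { toFun := fun w => ⟨Finset.univ.filter (fun i => w.val i = true), w.2⟩
      invFun := fun s => ⟨fun i => decide (i ∈ s.val), by
        simp only [cnt, decide_eq_true_eq]
        rw [Finset.filter_univ_mem]
        exact s.2⟩
      left_inv := fun w => by
        apply Subtype.ext
        funext i
        simp only [Finset.mem_filter, Finset.mem_univ, true_and]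
        cases h : w.val i <;> simp [h]
      right_inv := fun s => by
        apply Subtype.ext
        ext i
        simp }
  rw [Nat.card_congr e3, Nat.card_eq_fintype_card, Fintype.card_finset_len]
  simp

lemma phi_bijective (n d : ℕ) (hpos : 0 < n + d) (h : Nat.gcd n d = 1) :
    Function.Bijective (fun p : Fin (n + d) × {w : Fin (n + d) → Bool // Good n d w} =>
      (⟨rotw p.1 p.2.val, by rw [cnt_rotw]; exact p.2.2.1⟩ :
        {w : Fin (n + d) → Bool // cnt w = d})) := by
  haveI : NeZero (n + d) := ⟨by omega⟩
  constructor
  · rintro ⟨t, w, hw⟩ ⟨t', w', hw'⟩ heq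
    simp only [Subtype.mk.injEq] at heq
    have h1 : rotw (t - t') w = w' := by
      have := congrArg (rotw (-t')) heq
      rw [rotw_rotw, rotw_rotw] at this
      have h2 : t' + -t' = 0 := by abel
      rw [h2, rotw_zero] at this
      rw [← this]
      congr 1
      abel
    have h3 : (t - t').val = 0 := good_rot_eq n d h w (t - t') hw (h1 ▸ hw')
    have h4 : t - t' = 0 := Fin.ext (by simpa using h3)
    have h5 : t = t' := by
      have := sub_eq_zero.mp h4
      exact this
    subst h5
    have h6 : w = w' := by rw [← h1, h4, rotw_zero]
    simp [h6]
  · rintro ⟨w, hw⟩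
    obtain ⟨t, ht⟩ := exists_good_rot n d hpos w hw
    refine ⟨⟨-t, ⟨rotw t w, ht⟩⟩, ?_⟩
    apply Subtype.ext
    show rotw (-t) (rotw t w) = w
    rw [rotw_rotw]
    have : t + -t = 0 := by abel
    rw [this, rotw_zero]

end Stmt4

/-- if `gcd(n,d) = 1` then `(n+d) * |Dyck_{d,n}| = C(n+d, d)`; in
particular `n + d` divides `C(n+d, d)`. -/
theorem stmt4 (n d : ℕ) (hn : 0 < n) (hd : 0 < d) (h : Nat.gcd n d = 1) :
    (n + d) * {x : Fin d → ℕ | InDyck n d x}.ncard = Nat.choose (n + d) d ∧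
    (n + d) ∣ Nat.choose (n + d) d := by
  classical
  have hpos : 0 < n + d := by omega
  have hncard : {x : Fin d → ℕ | InDyck n d x}.ncard
      = Nat.card {x : Fin d → ℕ // InDyck n d x} := by
    rw [← Nat.card_coe_set_eq]
    rfl
  have e1 : {x : Fin d → ℕ // InDyck n d x} ≃ {w : Fin (n + d) → Bool // Stmt4.Good n d w} := by
    apply Equiv.ofBijective (fun x => ⟨Stmt4.wx n d x.val, Stmt4.good_wx n d x.val x.2⟩)
    constructor
    · rintro ⟨x, hx⟩ ⟨x', hx'⟩ heq
      simp only [Subtype.mk.injEq] at heq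
      exact Subtype.ext (Stmt4.wx_inj n d x x' hx.1 hx'.1 heq)
    · rintro ⟨w, hw⟩
      obtain ⟨x, hx, hwx⟩ := Stmt4.dyck_of_good n d w hw
      exact ⟨⟨x, hx⟩, Subtype.ext hwx⟩
  have e2 := Equiv.ofBijective _ (Stmt4.phi_bijective n d hpos h)
  have hcardeq : (n + d) * Nat.card {w : Fin (n + d) → Bool // Stmt4.Good n d w}
      = Nat.choose (n + d) d := by
    rw [← Stmt4.card_words n d, ← Nat.card_congr e2, Nat.card_prod,
      Nat.card_eq_fintype_card (α := Fin (n + d)), Fintype.card_fin]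
  have main : (n + d) * {x : Fin d → ℕ | InDyck n d x}.ncard = Nat.choose (n + d) d := by
    rw [hncard, Nat.card_congr e1, hcardeq]
  exact ⟨main, ⟨_, main.symm⟩⟩
end

section
/- Let n and d be positive integers with gcd(n,d) = 1. Let x, x' ∈ Dyck_{d,n} and let i be an integer with 2 ≤ i ≤ n+d. Then the relation x̄ R r^i(x̄') does not hold in L_{d+1,n}, where r is the rotation on L_{d+1,n}. -/
private lemma mono_lb {e : ℕ} (f : Fin e → ℕ) (hf : StrictMono f) :
    ∀ (k : ℕ) (hk : k < e) (h0 : 0 < e), k + f ⟨0, h0⟩ ≤ f ⟨k, hk⟩ := by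
  intro k
  induction k with
  | zero => intro hk h0; simp
  | succ p ih =>
    intro hk h0
    have h1 : p < e := by omega
    have h2 := ih h1 h0
    have h3 : f ⟨p, h1⟩ < f ⟨p + 1, hk⟩ := hf (Fin.mk_lt_mk.mpr (by omega))
    omega

private lemma mul_bound (d a b c : ℕ) (h : d * (a - b) ≤ c) : d * a ≤ c + d * b := by
  rcases Nat.le_total a b with hab | hab
  · calc d * a ≤ d * b := Nat.mul_le_mul_left d hab
      _ ≤ c + d * b := Nat.le_add_left _ _
  · have he : d * (a - b) + d * b = d * a := by
      rw [← Nat.mul_add]; congr 1; omega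
    rw [← he]
    exact Nat.add_le_add_right h _

private lemma rot_formula (n d : ℕ) (y' : Fin (d + 1) → ℕ)
    (hmono : StrictMono y') (h1 : ∀ k, 1 ≤ y' k) (h2 : ∀ k, y' k ≤ n + d + 1) :
    ∀ i, i ≤ n + d → ∃ t, t ≤ d + 1 ∧
      (∀ k : Fin (d + 1), ((k : ℕ) < t ↔ y' k ≤ i)) ∧
      (∀ (a : ℕ) (ha1 : a < d + 1) (ha2 : a + t < d + 1),
        ((rot n (d + 1))^[i] y') ⟨a, ha1⟩ = y' ⟨a + t, ha2⟩ - i) ∧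
      (∀ (a : ℕ) (ha1 : a < d + 1) (ha2 : d + 1 ≤ a + t) (ha3 : a + t - (d + 1) < d + 1),
        ((rot n (d + 1))^[i] y') ⟨a, ha1⟩ = y' ⟨a + t - (d + 1), ha3⟩ + (n + d + 1 - i)) := by
  have hrot_eval : ∀ (w : Fin (d + 1) → ℕ) (a : ℕ) (ha : a < d + 1),
      rot n (d + 1) w ⟨a, ha⟩ =
        if w ⟨0, Nat.succ_pos d⟩ = 1 then
          (if h2 : a + 1 < d + 1 then w ⟨a + 1, h2⟩ - 1 else n + (d + 1))
        else w ⟨a, ha⟩ - 1 := by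
    intro w a ha
    simp only [rot]
    rw [dif_pos (Nat.succ_pos d)]
  intro i
  induction i with
  | zero =>
    intro _
    refine ⟨0, by omega, ?_, ?_, ?_⟩
    · intro k
      constructor
      · intro hk; exact absurd hk (Nat.not_lt_zero _)
      · intro hk; have := h1 k; omega
    · intro a ha1 ha2
      have hje : (⟨a + 0, ha2⟩ : Fin (d + 1)) = ⟨a, ha1⟩ := Fin.ext rfl
      rw [Function.iterate_zero_apply, hje, Nat.sub_zero]
    · intro a ha1 ha2 ha3
      exact absurd ha2 (by omega)
  | succ i ih =>
    intro hi
    obtain ⟨t, ht, hiff, hf1, hf2⟩ := ih (by omega)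
    set z := (rot n (d + 1))^[i] y' with hzd
    have hit : ∀ (a : ℕ) (ha : a < d + 1),
        ((rot n (d + 1))^[i + 1] y') ⟨a, ha⟩ = rot n (d + 1) z ⟨a, ha⟩ := by
      intro a ha
      rw [Function.iterate_succ_apply', ← hzd]
    by_cases hA : ∃ j : Fin (d + 1), y' j = i + 1
    · obtain ⟨j, hj⟩ := hA
      have hjt : (j : ℕ) = t := by
        have h1j : ¬ ((j : ℕ) < t) := fun hlt => by
          have := (hiff j).1 hlt; omega
        by_contra hne
        have htlt : t < d + 1 := by have := j.isLt; omega
        have hlt2 : y' ⟨t, htlt⟩ < y' j :=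
          hmono (Fin.lt_def.mpr (by omega : t < (j : ℕ)))
        have h3 : ¬ (y' ⟨t, htlt⟩ ≤ i) := fun hle => by
          have h4 : t < t := (hiff ⟨t, htlt⟩).2 hle
          omega
        omega
      have htlt : t < d + 1 := by have := j.isLt; omega
      have p0 : 0 + t < d + 1 := by omega
      have hz0 : z ⟨0, Nat.succ_pos d⟩ = 1 := by
        rw [hf1 0 (Nat.succ_pos d) p0]
        have hje : (⟨0 + t, p0⟩ : Fin (d + 1)) = j := Fin.ext (by omega : 0 + t = (j : ℕ))
        rw [hje, hj]
        omega
      refine ⟨t + 1, by omega, ?_, ?_, ?_⟩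
      · intro k
        constructor
        · intro hk
          by_cases hlt : (k : ℕ) < t
          · have := (hiff k).1 hlt; omega
          · have hke : k = j := Fin.ext (by omega : (k : ℕ) = (j : ℕ))
            rw [hke, hj]
        · intro hk
          by_contra hc
          have hjk : j < k := Fin.lt_def.mpr (by omega : (j : ℕ) < (k : ℕ))
          have := hmono hjk
          rw [hj] at this
          omega
      · intro a ha1 ha2
        have ha3 : a + 1 < d + 1 := by omega
        have ha4 : (a + 1) + t < d + 1 := by omega
        rw [hit a ha1, hrot_eval z a ha1, if_pos hz0, dif_pos ha3, hf1 (a + 1) ha3 ha4]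
        have hje : (⟨(a + 1) + t, ha4⟩ : Fin (d + 1)) = ⟨a + (t + 1), ha2⟩ :=
          Fin.ext (by omega : (a + 1) + t = a + (t + 1))
        rw [hje]
        omega
      · intro a ha1 ha2 ha3
        by_cases hc : a + 1 < d + 1
        · have ha4 : d + 1 ≤ (a + 1) + t := by omega
          have ha5 : (a + 1) + t - (d + 1) < d + 1 := by omega
          rw [hit a ha1, hrot_eval z a ha1, if_pos hz0, dif_pos hc, hf2 (a + 1) hc ha4 ha5]
          have hje : (⟨(a + 1) + t - (d + 1), ha5⟩ : Fin (d + 1)) = ⟨a + (t + 1) - (d + 1), ha3⟩ :=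
            Fin.ext (by omega : (a + 1) + t - (d + 1) = a + (t + 1) - (d + 1))
          rw [hje]
          omega
        · rw [hit a ha1, hrot_eval z a ha1, if_pos hz0, dif_neg hc]
          have hje : (⟨a + (t + 1) - (d + 1), ha3⟩ : Fin (d + 1)) = j :=
            Fin.ext (by omega : a + (t + 1) - (d + 1) = (j : ℕ))
          rw [hje, hj]
          omega
    · have hz0ne : ¬ (z ⟨0, Nat.succ_pos d⟩ = 1) := by
        by_cases htlt : t < d + 1
        · have p0 : 0 + t < d + 1 := by omega
          rw [hf1 0 (Nat.succ_pos d) p0]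
          have hgt : ¬ (y' ⟨0 + t, p0⟩ ≤ i) := fun hle => by
            have h4 : 0 + t < t := (hiff ⟨0 + t, p0⟩).2 hle
            omega
          have hne : y' ⟨0 + t, p0⟩ ≠ i + 1 := fun he => hA ⟨⟨0 + t, p0⟩, he⟩
          omega
        · have q2 : d + 1 ≤ 0 + t := by omega
          have q3 : 0 + t - (d + 1) < d + 1 := by omega
          rw [hf2 0 (Nat.succ_pos d) q2 q3]
          have := h1 ⟨0 + t - (d + 1), q3⟩
          omega
      refine ⟨t, by omega, ?_, ?_, ?_⟩
      · intro k
        have hne : y' k ≠ i + 1 := fun he => hA ⟨k, he⟩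
        have hk2 := hiff k
        constructor
        · intro hk; have := hk2.1 hk; omega
        · intro hk; exact hk2.2 (by omega)
      · intro a ha1 ha2
        rw [hit a ha1, hrot_eval z a ha1, if_neg hz0ne, hf1 a ha1 ha2]
        omega
      · intro a ha1 ha2 ha3
        rw [hit a ha1, hrot_eval z a ha1, if_neg hz0ne, hf2 a ha1 ha2 ha3]
        omega

/-- if `gcd(n,d) = 1`, `x, x' ∈ Dyck_{d,n}` and `2 ≤ i ≤ n + d`,
then `x̄ R r^i(x̄')` does not hold in `L_{d+1,n}`. -/
theorem stmt9 (n d : ℕ) (hn : 0 < n) (hd : 0 < d) (h : Nat.gcd n d = 1)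
    (x x' : Fin d → ℕ) (hx : InDyck n d x) (hx' : InDyck n d x')
    (i : ℕ) (hi1 : 2 ≤ i) (hi2 : i ≤ n + d) :
    ¬ RelR (d + 1) (barPath d x) ((rot n (d + 1))^[i] (barPath d x')) := by
  obtain ⟨⟨hxm, hx1, hx2⟩, hxd⟩ := hx
  obtain ⟨⟨hxm', hx1', hx2'⟩, hxd'⟩ := hx'
  have h0d : (0 : ℕ) < d + 1 := Nat.succ_pos d
  have h1d : (0 : ℕ) + 1 < d + 1 := by omega
  -- first entries of Dyck paths are 1
  have hx0 : x ⟨0, hd⟩ = 1 := by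
    have ha : d * (x ⟨0, hd⟩ - 1) ≤ n * 0 := hxd ⟨0, hd⟩
    have hb : 1 ≤ x ⟨0, hd⟩ := hx1 ⟨0, hd⟩
    have hc : d = 0 ∨ x ⟨0, hd⟩ - 1 = 0 := by simpa using ha
    rcases hc with h4 | h4 <;> omega
  have hx'0 : x' ⟨0, hd⟩ = 1 := by
    have ha : d * (x' ⟨0, hd⟩ - 1) ≤ n * 0 := hxd' ⟨0, hd⟩
    have hb : 1 ≤ x' ⟨0, hd⟩ := hx1' ⟨0, hd⟩
    have hc : d = 0 ∨ x' ⟨0, hd⟩ - 1 = 0 := by simpa using ha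
    rcases hc with h4 | h4 <;> omega
  -- evaluation of barPath
  have hysucc : ∀ (a : ℕ) (hA : a + 1 < d + 1) (hA' : a < d),
      barPath d x ⟨a + 1, hA⟩ = x ⟨a, hA'⟩ + 1 := by
    intro a hA hA'
    have he : (⟨a + 1, hA⟩ : Fin (d + 1)) = Fin.succ ⟨a, hA'⟩ := rfl
    rw [he]
    simp only [barPath]
    rw [Fin.cons_succ]
  have hy0 : ∀ hA : (0 : ℕ) < d + 1, barPath d x ⟨0, hA⟩ = 1 := by
    intro hA
    rw [Fin.mk_zero]; simp [barPath]
  have hy'succ : ∀ (a : ℕ) (hA : a + 1 < d + 1) (hA' : a < d),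
      barPath d x' ⟨a + 1, hA⟩ = x' ⟨a, hA'⟩ + 1 := by
    intro a hA hA'
    have he : (⟨a + 1, hA⟩ : Fin (d + 1)) = Fin.succ ⟨a, hA'⟩ := rfl
    rw [he]
    simp only [barPath]
    rw [Fin.cons_succ]
  have hy'0 : ∀ hA : (0 : ℕ) < d + 1, barPath d x' ⟨0, hA⟩ = 1 := by
    intro hA
    rw [Fin.mk_zero]; simp [barPath]
  -- barPath x' is a lattice path
  have hy'mono : StrictMono (barPath d x') := by
    intro a b hab
    obtain hb | ⟨b', rfl⟩ := Fin.eq_zero_or_eq_succ b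
    · subst hb
      rw [Fin.lt_def] at hab
      simp at hab
    · obtain ha | ⟨a', rfl⟩ := Fin.eq_zero_or_eq_succ a
      · subst ha
        simp only [barPath, Fin.cons_zero, Fin.cons_succ]
        have := hx1' b'
        omega
      · simp only [barPath, Fin.cons_succ]
        have hab' : a' < b' := by rwa [Fin.succ_lt_succ_iff] at hab
        have := hxm' hab'
        omega
  have hy'1 : ∀ k, 1 ≤ barPath d x' k := by
    intro k
    induction k using Fin.cases with
    | zero => simp [barPath]
    | succ j => simp only [barPath, Fin.cons_succ]; omega
  have hy'2 : ∀ k, barPath d x' k ≤ n + d + 1 := by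
    intro k
    induction k using Fin.cases with
    | zero => simp only [barPath, Fin.cons_zero]; omega
    | succ j => simp only [barPath, Fin.cons_succ]; have := hx2' j; omega
  obtain ⟨t, ht, hiff, hf1, hf2⟩ :=
    rot_formula n d (barPath d x') hy'mono hy'1 hy'2 i hi2
  set z := (rot n (d + 1))^[i] (barPath d x') with hzdef
  -- adjacent strict monotonicity of z
  have hzmono : ∀ (k : ℕ) (hA : k < d + 1) (hB : k + 1 < d + 1),
      z ⟨k, hA⟩ < z ⟨k + 1, hB⟩ := by
    intro k hA hB
    by_cases c1 : k + t < d + 1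
    · by_cases c2 : (k + 1) + t < d + 1
      · rw [hf1 k hA c1, hf1 (k + 1) hB c2]
        have hm : barPath d x' ⟨k + t, c1⟩ < barPath d x' ⟨(k + 1) + t, c2⟩ :=
          hy'mono (Fin.mk_lt_mk.mpr (by omega))
        have hg : ¬ (barPath d x' ⟨k + t, c1⟩ ≤ i) := fun hle => by
          have h5 : k + t < t := (hiff ⟨k + t, c1⟩).2 hle
          omega
        omega
      · have q2 : d + 1 ≤ (k + 1) + t := by omega
        have q3 : (k + 1) + t - (d + 1) < d + 1 := by omega
        rw [hf1 k hA c1, hf2 (k + 1) hB q2 q3]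
        have hb := hy'2 ⟨k + t, c1⟩
        have ha := hy'1 ⟨(k + 1) + t - (d + 1), q3⟩
        omega
    · have q2 : d + 1 ≤ k + t := by omega
      have q3 : k + t - (d + 1) < d + 1 := by omega
      have q4 : d + 1 ≤ (k + 1) + t := by omega
      have q5 : (k + 1) + t - (d + 1) < d + 1 := by omega
      rw [hf2 k hA q2 q3, hf2 (k + 1) hB q4 q5]
      have hm : barPath d x' ⟨k + t - (d + 1), q3⟩ < barPath d x' ⟨(k + 1) + t - (d + 1), q5⟩ :=
        hy'mono (Fin.mk_lt_mk.mpr (by omega))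
      omega
  intro hrel
  obtain ⟨-, hdom⟩ := hrel
  -- step 1 : z 0 = 1
  have hz0 : z ⟨0, h0d⟩ = 1 := by
    have hz0ge : 1 ≤ z ⟨0, h0d⟩ := by
      by_cases c : 0 + t < d + 1
      · rw [hf1 0 h0d c]
        have hg : ¬ (barPath d x' ⟨0 + t, c⟩ ≤ i) := fun hle => by
          have h5 : 0 + t < t := (hiff ⟨0 + t, c⟩).2 hle
          omega
        omega
      · have q2 : d + 1 ≤ 0 + t := by omega
        have q3 : 0 + t - (d + 1) < d + 1 := by omega
        rw [hf2 0 h0d q2 q3]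
        have := hy'1 ⟨0 + t - (d + 1), q3⟩
        omega
    by_contra hne
    apply hdom
    have hz01 : z ⟨0, h0d⟩ < z ⟨0 + 1, h1d⟩ := hzmono 0 h0d h1d
    refine ⟨0, z ⟨0, h0d⟩ - 2, ⟨⟨h0d, ?_⟩, ?_⟩, ⟨⟨h1d, ?_⟩, ?_⟩⟩
    · show z ⟨0, h0d⟩ - 2 + 0 + 2 ≤ z ⟨0, h0d⟩
      omega
    · rintro ⟨hh, hle⟩
      have hle2 : z ⟨0, h0d⟩ - 2 + 0 + 2 ≤ barPath d x ⟨0, h0d⟩ := hle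
      rw [hy0 h0d] at hle2
      omega
    · show z ⟨0, h0d⟩ - 2 + (0 + 1) + 2 ≤ z ⟨0 + 1, h1d⟩
      omega
    · rintro ⟨hh, hle⟩
      have hle2 : z ⟨0, h0d⟩ - 2 + (0 + 1) + 2 ≤ barPath d x ⟨0 + 1, h1d⟩ := hle
      rw [hysucc 0 h1d hd, hx0] at hle2
      omega
  -- step 2 : t ≤ d and y'(t) = i + 1
  have htle : t < d + 1 := by
    by_contra hc
    have q2 : d + 1 ≤ 0 + t := by omega
    have q3 : 0 + t - (d + 1) < d + 1 := by omega
    have he := hf2 0 h0d q2 q3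
    rw [hz0] at he
    have := hy'1 ⟨0 + t - (d + 1), q3⟩
    omega
  have p0t : 0 + t < d + 1 := by omega
  have e0 := hf1 0 h0d p0t
  rw [hz0] at e0
  -- step 3 : t ≥ 2
  have ht0 : (0 : ℕ) < t := (hiff ⟨0, h0d⟩).2 (by rw [hy'0 h0d]; omega)
  have ht1 : (0 : ℕ) + 1 < t := (hiff ⟨0 + 1, h1d⟩).2 (by rw [hy'succ 0 h1d hd, hx'0]; omega)
  obtain ⟨s, hts, hs1, hsd⟩ : ∃ s, t = s + 1 ∧ 1 ≤ s ∧ s + 1 ≤ d :=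
    ⟨t - 1, by omega, by omega, by omega⟩
  obtain ⟨m, hm⟩ : ∃ m, m = d - (s + 1) := ⟨_, rfl⟩
  -- x'(s) = i
  have ps1 : s + 1 < d + 1 := by omega
  have hsd' : s < d := by omega
  have hje2 : (⟨0 + t, p0t⟩ : Fin (d + 1)) = ⟨s + 1, ps1⟩ :=
    Fin.ext (by omega : 0 + t = s + 1)
  rw [hje2, hy'succ s ps1 hsd'] at e0
  have hgt : ¬ (x' ⟨s, hsd'⟩ + 1 ≤ i) := fun hle => by
    have h6 : s + 1 < t :=
      (hiff ⟨s + 1, ps1⟩).2 (by rw [hy'succ s ps1 hsd']; exact hle)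
    omega
  have hx'i : x' ⟨s, hsd'⟩ = i := by omega
  -- the wrapped entry z (m+1) = 1 + (n+d+1-i)
  have pk1 : m + 1 < d + 1 := by omega
  have pk2 : d + 1 ≤ (m + 1) + t := by omega
  have pk3 : (m + 1) + t - (d + 1) < d + 1 := by omega
  have ezk := hf2 (m + 1) pk1 pk2 pk3
  have hje3 : (⟨(m + 1) + t - (d + 1), pk3⟩ : Fin (d + 1)) = ⟨0, h0d⟩ :=
    Fin.ext (by omega : (m + 1) + t - (d + 1) = 0)
  rw [hje3, hy'0 h0d] at ezk
  -- domino forces x (m+1) + i ≥ n + d + 2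
  have pk4 : (m + 1) + 1 < d + 1 := by omega
  have hm1d : m + 1 < d := by omega
  have hmd : m < d := by omega
  have hxlb : (m + 1) + x ⟨0, hd⟩ ≤ x ⟨m + 1, hm1d⟩ := mono_lb x hxm (m + 1) hm1d hd
  have hxmono : x ⟨m, hmd⟩ < x ⟨m + 1, hm1d⟩ := hxm (Fin.mk_lt_mk.mpr (by omega))
  have hyk1 : barPath d x ⟨(m + 1) + 1, pk4⟩ = x ⟨m + 1, hm1d⟩ + 1 := hysucc (m + 1) pk4 hm1d
  have hX : z ⟨m + 1, pk1⟩ < barPath d x ⟨(m + 1) + 1, pk4⟩ := by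
    by_contra hc
    rw [hyk1] at hc
    apply hdom
    have hzk1 : z ⟨m + 1, pk1⟩ < z ⟨(m + 1) + 1, pk4⟩ := hzmono (m + 1) pk1 pk4
    refine ⟨m + 1, z ⟨m + 1, pk1⟩ - (m + 1) - 2, ⟨⟨pk1, ?_⟩, ?_⟩, ⟨⟨pk4, ?_⟩, ?_⟩⟩
    · show z ⟨m + 1, pk1⟩ - (m + 1) - 2 + (m + 1) + 2 ≤ z ⟨m + 1, pk1⟩
      omega
    · rintro ⟨hh, hle⟩
      have hle2 : z ⟨m + 1, pk1⟩ - (m + 1) - 2 + (m + 1) + 2 ≤ barPath d x ⟨m + 1, pk1⟩ := hle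
      rw [hysucc m pk1 hmd] at hle2
      omega
    · show z ⟨m + 1, pk1⟩ - (m + 1) - 2 + ((m + 1) + 1) + 2 ≤ z ⟨(m + 1) + 1, pk4⟩
      omega
    · rintro ⟨hh, hle⟩
      have hle2 : z ⟨m + 1, pk1⟩ - (m + 1) - 2 + ((m + 1) + 1) + 2 ≤
          barPath d x ⟨(m + 1) + 1, pk4⟩ := hle
      rw [hyk1] at hle2
      omega
  rw [hyk1] at hX
  have hXi : n + d + 2 ≤ x ⟨m + 1, hm1d⟩ + i := by omega
  -- Dyck inequalities
  have hdy : d * (x ⟨m + 1, hm1d⟩ - (m + 1 + 1)) ≤ n * (m + 1) := hxd ⟨m + 1, hm1d⟩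
  have hA2 : d * x ⟨m + 1, hm1d⟩ ≤ n * (m + 1) + d * (m + 1 + 1) := mul_bound _ _ _ _ hdy
  have hdy' : d * (x' ⟨s, hsd'⟩ - (s + 1)) ≤ n * s := hxd' ⟨s, hsd'⟩
  have hB2 : d * x' ⟨s, hsd'⟩ ≤ n * s + d * (s + 1) := mul_bound _ _ _ _ hdy'
  rw [hx'i] at hB2
  -- final arithmetic
  have step1 : d * (n + d + 2) ≤ d * (x ⟨m + 1, hm1d⟩ + i) := Nat.mul_le_mul_left d hXi
  have e0' : d * (x ⟨m + 1, hm1d⟩ + i) = d * x ⟨m + 1, hm1d⟩ + d * i := by ring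
  have e1 : n * (m + 1) + n * s = n * d := by
    rw [← Nat.mul_add]; congr 1; omega
  have e2 : d * (m + 1 + 1) + d * (s + 1) = d * (d + 2) := by
    rw [← Nat.mul_add]; congr 1; omega
  have e3 : d * (n + d + 2) = n * d + d * (d + 2) := by ring
  have hge : n * s + d * (s + 1) ≤ d * i := by linarith
  have e4 : d * (s + 1) = d * s + d := by ring
  have e5 : (n + d) * s = n * s + d * s := by ring
  have e6 : d * (i - 1) + d = d * i := by
    rw [← Nat.mul_succ]; congr 1; omega
  have hdveq : d * (i - 1) = (n + d) * s := by linarith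
  have hcop : Nat.Coprime (n + d) d := by
    exact Nat.coprime_add_self_left.mpr h
  have hdvd : (n + d) ∣ (i - 1) :=
    Nat.Coprime.dvd_of_dvd_mul_left hcop ⟨s, hdveq⟩
  have := Nat.le_of_dvd (by omega) hdvd
  omega
end
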